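/- arXiv:1207.4373 — 10 statements merged into one kernel-verified Lean document; each statement's English description precedes it below -/
import Mathlib

section
/- A finite connected C-MI graph with no cycles (i.e., a finite tree) is isomorphic to K₁ or K₂. -/
/-- A graph `G` is C-MI if every monomorphism (injective homomorphism) from a
finite connected induced subgraph of `G` into `G` extends to an automorphism. -/
def IsCMI {α : Type*} (G : SimpleGraph α) : Prop :=
  ∀ A : Set α, A.Finite → (G.induce A).Connected →
    ∀ φ : G.induce A →g G, Function.Injective φ →
      ∃ ψ : G ≃g G, ∀ a : A, ψ a.1 = φ a

/-!
A C-MI graph is vertex-transitive: the map sending a single vertex `u` to any vertex `w` is a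
monomorphism from the one-vertex induced subgraph `{u}`, so it extends to an automorphism. Hence a
finite C-MI graph is regular. A `d`-regular tree on `n` vertices has `d * n = 2 * (n - 1)` by the
degree-sum formula, which forces `n ≤ 2`, and a connected graph on at most two vertices is complete.
-/

namespace SimpleGraph

variable {α : Type*} {G : SimpleGraph α}

theorem IsTree.card_le_two_of_isRegularOfDegree [Fintype α] [DecidableRel G.Adj]
    (hT : G.IsTree) {d : ℕ} (hd : G.IsRegularOfDegree d) : Fintype.card α ≤ 2 := by
  have hedges := hT.card_edgeFinset
  have hsum := G.sum_degrees_eq_twice_card_edges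
  simp only [hd.degree_eq, Finset.sum_const, Finset.card_univ, smul_eq_mul] at hsum
  rcases Nat.lt_or_ge d 2 with hd2 | hd2
  · interval_cases d <;> omega
  · nlinarith

theorem Connected.eq_top_of_card_le_two [Fintype α] (hG : G.Connected)
    (hcard : Fintype.card α ≤ 2) : G = ⊤ := by
  ext a b
  refine ⟨Adj.ne, fun hab => ?_⟩
  obtain ⟨p⟩ := hG.preconnected a b
  cases p with
  | nil => exact absurd rfl hab
  | @cons _ x _ hax _ =>
    by_contra hnadj
    have hxb : x ≠ b := fun hxb => hnadj (hxb ▸ hax)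
    exact hcard.not_gt (Fintype.two_lt_card_iff.2 ⟨a, b, x, hab, hax.ne, hxb.symm⟩)

end SimpleGraph

namespace IsCMI

open SimpleGraph

variable {α : Type*} {G : SimpleGraph α}

theorem exists_iso_apply_eq (hG : IsCMI G) (u w : α) : ∃ ψ : G ≃g G, ψ u = w := by
  have hconn : (G.induce {u}).Connected := by
    have : Nonempty ({u} : Set α) := ⟨⟨u, rfl⟩⟩
    exact ⟨fun a b => Subsingleton.elim a b ▸ Reachable.refl a⟩
  let φ : G.induce {u} →g G :=
    ⟨fun _ => w, fun {a b} hab => absurd (Subsingleton.elim a b ▸ hab) (G.induce {u}).irrefl⟩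
  obtain ⟨ψ, hψ⟩ := hG {u} (Set.finite_singleton u) hconn φ fun a b _ => Subsingleton.elim a b
  exact ⟨ψ, hψ ⟨u, rfl⟩⟩

theorem isRegularOfDegree [G.LocallyFinite] (hG : IsCMI G) (u : α) :
    G.IsRegularOfDegree (G.degree u) := fun w => by
  obtain ⟨ψ, rfl⟩ := hG.exists_iso_apply_eq u w
  exact ψ.degree_eq u

end IsCMI

/-- A finite connected C-MI graph with no cycles (a finite tree) is isomorphic
to `K₁` or `K₂`. -/
theorem cMI_tree_is_K1_or_K2 {α : Type*} [Fintype α]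
    (G : SimpleGraph α) (hG : IsCMI G)
    (hconn : G.Connected) (hacyc : G.IsAcyclic) :
    Nonempty (G ≃g (⊤ : SimpleGraph (Fin 1))) ∨
      Nonempty (G ≃g (⊤ : SimpleGraph (Fin 2))) := by
  classical
  obtain ⟨u⟩ := hconn.nonempty
  have hcard : Fintype.card α ≤ 2 :=
    SimpleGraph.IsTree.card_le_two_of_isRegularOfDegree ⟨hconn, hacyc⟩ (hG.isRegularOfDegree u)
  obtain rfl : G = ⊤ := hconn.eq_top_of_card_le_two hcard
  have hpos : 0 < Fintype.card α := Fintype.card_pos_iff.2 ⟨u⟩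
  interval_cases hn : Fintype.card α
  · exact .inl ⟨SimpleGraph.Iso.completeGraph (Fintype.equivFinOfCardEq hn)⟩
  · exact .inr ⟨SimpleGraph.Iso.completeGraph (Fintype.equivFinOfCardEq hn)⟩
end

section
/- Every finite complete bipartite graph K_{s,s} with both parts of equal size s ≥ 2 is C-MI: every injective graph homomorphism between connected induced subgraphs of K_{s,s} extends to an automorphism of K_{s,s}. -/
/-- Any injective map from a subset of `Fin n` into `Fin n` extends to a
permutation of `Fin n`. -/
lemma exists_perm_extend {n : ℕ} {S : Set (Fin n)} (f : S → Fin n)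
    (hf : Function.Injective f) :
    ∃ e : Equiv.Perm (Fin n), ∀ x : S, e x.1 = f x := by
  classical
  let e0 : {x : Fin n // x ∈ S} ≃ {x : Fin n // x ∈ Set.range f} :=
    Equiv.ofInjective f hf
  refine ⟨e0.extendSubtype, fun x => ?_⟩
  rw [Equiv.extendSubtype_apply_of_mem e0 x.1 x.2]
  simp [e0]

/-- Adjacent vertices of the complete bipartite graph lie on opposite sides. -/
lemma adj_isLeft {s : ℕ} {u v : Fin s ⊕ Fin s}
    (h : (completeBipartiteGraph (Fin s) (Fin s)).Adj u v) :
    u.isLeft = !v.isLeft := by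
  rcases u with u | u <;> rcases v with v | v <;> simp_all

/-- Along a walk in a connected induced subgraph, the "side twist" of a
homomorphism is constant. -/
lemma walk_invariant {s : ℕ} {A : Set (Fin s ⊕ Fin s)}
    (φ : (completeBipartiteGraph (Fin s) (Fin s)).induce A →g
      completeBipartiteGraph (Fin s) (Fin s))
    {a b : A} (w : ((completeBipartiteGraph (Fin s) (Fin s)).induce A).Walk a b) :
    ((a.1.isLeft = ((φ a : Fin s ⊕ Fin s)).isLeft) ↔
      (b.1.isLeft = ((φ b : Fin s ⊕ Fin s)).isLeft)) := by
  induction w with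
  | nil => rfl
  | @cons u v c h p ih =>
    have h1 : (completeBipartiteGraph (Fin s) (Fin s)).Adj u.1 v.1 := h
    have h2 := φ.map_rel h
    rw [adj_isLeft h1, adj_isLeft h2, Bool.not_inj_iff]
    exact ih

/-- Every finite complete bipartite graph `K_{s,s}` with parts of equal size
`s ≥ 2` is C-MI. -/
theorem completeBipartite_equal_parts_isCMI (s : ℕ) (hs : 2 ≤ s) :
    IsCMI (completeBipartiteGraph (Fin s) (Fin s)) := by
  classical
  intro A hA hconn φ hφ
  obtain ⟨a0⟩ := hconn.nonempty
  by_cases htwist : a0.1.isLeft = ((φ a0 : Fin s ⊕ Fin s)).isLeft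
  · -- side-preserving case
    have hall : ∀ a : A, a.1.isLeft = ((φ a : Fin s ⊕ Fin s)).isLeft := by
      intro a
      obtain ⟨w⟩ := hconn.preconnected a a0
      exact (walk_invariant φ w).mpr htwist
    have hleft : ∀ (i : Fin s) (hi : Sum.inl i ∈ A),
        ((φ ⟨Sum.inl i, hi⟩ : Fin s ⊕ Fin s)).isLeft := by
      intro i hi
      have := hall ⟨Sum.inl i, hi⟩
      simpa using this.symm
    have hright : ∀ (j : Fin s) (hj : Sum.inr j ∈ A),
        ((φ ⟨Sum.inr j, hj⟩ : Fin s ⊕ Fin s)).isRight := by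
      intro j hj
      have := hall ⟨Sum.inr j, hj⟩
      rcases hp : (φ ⟨Sum.inr j, hj⟩ : Fin s ⊕ Fin s) with x | x <;> simp_all
    set SL : Set (Fin s) := {i | Sum.inl i ∈ A} with hSL
    set SR : Set (Fin s) := {j | Sum.inr j ∈ A} with hSR
    let fL : SL → Fin s := fun x =>
      ((φ ⟨Sum.inl x.1, x.2⟩ : Fin s ⊕ Fin s)).getLeft (hleft x.1 x.2)
    let fR : SR → Fin s := fun x =>
      ((φ ⟨Sum.inr x.1, x.2⟩ : Fin s ⊕ Fin s)).getRight (hright x.1 x.2)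
    have hfLval : ∀ x : SL, (φ ⟨Sum.inl x.1, x.2⟩ : Fin s ⊕ Fin s) = Sum.inl (fL x) :=
      fun x => (Sum.getLeft_eq_iff _).mp rfl
    have hfRval : ∀ x : SR, (φ ⟨Sum.inr x.1, x.2⟩ : Fin s ⊕ Fin s) = Sum.inr (fR x) :=
      fun x => (Sum.getRight_eq_iff _).mp rfl
    have hfLinj : Function.Injective fL := by
      intro x y hxy
      have h1 : (⟨Sum.inl x.1, x.2⟩ : A) = ⟨Sum.inl y.1, y.2⟩ := by
        apply hφ
        rw [hfLval x, hfLval y, hxy]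
      have h2 : Sum.inl (α := Fin s) (β := Fin s) x.1 = Sum.inl y.1 :=
        congrArg Subtype.val h1
      exact Subtype.ext (Sum.inl.inj h2)
    have hfRinj : Function.Injective fR := by
      intro x y hxy
      have h1 : (⟨Sum.inr x.1, x.2⟩ : A) = ⟨Sum.inr y.1, y.2⟩ := by
        apply hφ
        rw [hfRval x, hfRval y, hxy]
      have h2 : Sum.inr (α := Fin s) (β := Fin s) x.1 = Sum.inr y.1 :=
        congrArg Subtype.val h1
      exact Subtype.ext (Sum.inr.inj h2)
    obtain ⟨eL, heL⟩ := exists_perm_extend fL hfLinj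
    obtain ⟨eR, heR⟩ := exists_perm_extend fR hfRinj
    refine ⟨⟨Equiv.sumCongr eL eR, ?_⟩, ?_⟩
    · intro u v
      rcases u with u | u <;> rcases v with v | v <;> simp
    · rintro ⟨x, hx⟩
      rcases x with i | j
      · show Sum.map eL eR (Sum.inl i) = _
        rw [Sum.map_inl, heL ⟨i, hx⟩, ← hfLval ⟨i, hx⟩]
      · show Sum.map eL eR (Sum.inr j) = _
        rw [Sum.map_inr, heR ⟨j, hx⟩, ← hfRval ⟨j, hx⟩]
  · -- side-swapping case
    have hall : ∀ a : A, a.1.isLeft = !((φ a : Fin s ⊕ Fin s)).isLeft := by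
      intro a
      obtain ⟨w⟩ := hconn.preconnected a a0
      have := (walk_invariant φ w).not.mpr htwist
      cases ha : a.1.isLeft <;> cases hb : ((φ a : Fin s ⊕ Fin s)).isLeft <;> simp_all
    have hleft : ∀ (i : Fin s) (hi : Sum.inl i ∈ A),
        ((φ ⟨Sum.inl i, hi⟩ : Fin s ⊕ Fin s)).isRight := by
      intro i hi
      have := hall ⟨Sum.inl i, hi⟩
      rcases hp : (φ ⟨Sum.inl i, hi⟩ : Fin s ⊕ Fin s) with x | x <;> simp_all
    have hright : ∀ (j : Fin s) (hj : Sum.inr j ∈ A),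
        ((φ ⟨Sum.inr j, hj⟩ : Fin s ⊕ Fin s)).isLeft := by
      intro j hj
      have := hall ⟨Sum.inr j, hj⟩
      rcases hp : (φ ⟨Sum.inr j, hj⟩ : Fin s ⊕ Fin s) with x | x <;> simp_all
    set SL : Set (Fin s) := {i | Sum.inl i ∈ A} with hSL
    set SR : Set (Fin s) := {j | Sum.inr j ∈ A} with hSR
    let fL : SL → Fin s := fun x =>
      ((φ ⟨Sum.inl x.1, x.2⟩ : Fin s ⊕ Fin s)).getRight (hleft x.1 x.2)
    let fR : SR → Fin s := fun x =>
      ((φ ⟨Sum.inr x.1, x.2⟩ : Fin s ⊕ Fin s)).getLeft (hright x.1 x.2)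
    have hfLval : ∀ x : SL, (φ ⟨Sum.inl x.1, x.2⟩ : Fin s ⊕ Fin s) = Sum.inr (fL x) :=
      fun x => (Sum.getRight_eq_iff _).mp rfl
    have hfRval : ∀ x : SR, (φ ⟨Sum.inr x.1, x.2⟩ : Fin s ⊕ Fin s) = Sum.inl (fR x) :=
      fun x => (Sum.getLeft_eq_iff _).mp rfl
    have hfLinj : Function.Injective fL := by
      intro x y hxy
      have h1 : (⟨Sum.inl x.1, x.2⟩ : A) = ⟨Sum.inl y.1, y.2⟩ := by
        apply hφ
        rw [hfLval x, hfLval y, hxy]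
      have h2 : Sum.inl (α := Fin s) (β := Fin s) x.1 = Sum.inl y.1 :=
        congrArg Subtype.val h1
      exact Subtype.ext (Sum.inl.inj h2)
    have hfRinj : Function.Injective fR := by
      intro x y hxy
      have h1 : (⟨Sum.inr x.1, x.2⟩ : A) = ⟨Sum.inr y.1, y.2⟩ := by
        apply hφ
        rw [hfRval x, hfRval y, hxy]
      have h2 : Sum.inr (α := Fin s) (β := Fin s) x.1 = Sum.inr y.1 :=
        congrArg Subtype.val h1
      exact Subtype.ext (Sum.inr.inj h2)
    obtain ⟨eL, heL⟩ := exists_perm_extend fL hfLinj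
    obtain ⟨eR, heR⟩ := exists_perm_extend fR hfRinj
    refine ⟨⟨(Equiv.sumCongr eL eR).trans (Equiv.sumComm (Fin s) (Fin s)), ?_⟩, ?_⟩
    · intro u v
      rcases u with u | u <;> rcases v with v | v <;> simp
    · rintro ⟨x, hx⟩
      rcases x with i | j
      · show Sum.swap (Sum.map eL eR (Sum.inl i)) = _
        rw [Sum.map_inl, Sum.swap_inl, heL ⟨i, hx⟩, ← hfLval ⟨i, hx⟩]
      · show Sum.swap (Sum.map eL eR (Sum.inr j)) = _
        rw [Sum.map_inr, Sum.swap_inr, heR ⟨j, hx⟩, ← hfRval ⟨j, hx⟩]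
end

section
/- Every K_n-treelike finite connected graph (n ≥ 2) is C-HH: every homomorphism from a finite connected induced subgraph into the graph extends to an endomorphism. -/
/-- `G` is C-HH: every homomorphism from a finite connected induced subgraph
of `G` into `G` extends to an endomorphism of `G`. -/
def IsCHH {α : Type*} (G : SimpleGraph α) : Prop :=
  ∀ A : Set α, A.Finite → (G.induce A).Connected →
    ∀ φ : G.induce A →g G, ∃ ψ : G →g G, ∀ a : A, ψ a.1 = φ a

/-- `G` has an induced cycle of length `k`: there are `k` distinct vertices
whose induced subgraph is exactly the `k`-cycle (no chords). -/
def HasInducedCycle {α : Type*} (G : SimpleGraph α) (k : ℕ) : Prop :=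
  ∃ f : Fin k ↪ α, ∀ i j : Fin k,
    G.Adj (f i) (f j) ↔ ((i.val + 1) % k = j.val ∨ (j.val + 1) % k = i.val)

/-- `H` is a disjoint union of complete graphs each of size `m`: adjacency is
transitive (so each component is a clique) and each closed neighbourhood has
exactly `m` vertices. -/
def IsDisjUnionOfCompleteOfSize {α : Type*} (H : SimpleGraph α) (m : ℕ) : Prop :=
  (∀ x y z : α, H.Adj x y → H.Adj y z → x ≠ z → H.Adj x z) ∧
  ∀ x : α, (insert x {y | H.Adj x y}).ncard = m

/-
Extend the homomorphism one vertex at a time, keeping its domain `A` connected. Take `v ∉ A`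
adjacent to `A`. The neighbours of `v` in `A` form a clique: a shortest path inside `A` between
two non-adjacent ones is chordless, so together with `v` it is an induced cycle of length at
least four, unless an interior vertex of the path is adjacent to `v` and splits it into two
shorter instances. Being a clique in the neighbourhood of `v`, it has at most `n - 1` vertices,
and so does its image `T` under the homomorphism. Pick `p ∈ T`: the rest of `T` lies in one copy
`C` of `K_{n-1}` in the neighbourhood of `p`, and `C` has a vertex outside `T`, adjacent to all of
`T`; send `v` there.
-/

lemma Nat.add_one_mod_eq_iff {k i j : ℕ} (hi : i < k) (hj : j < k) :
    (i + 1) % k = j ↔ i + 1 = j ∨ i + 1 = k ∧ j = 0 := by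
  obtain h | h : i + 1 < k ∨ i + 1 = k := by omega
  · rw [Nat.mod_eq_of_lt h]; omega
  · rw [h, Nat.mod_self]; omega

namespace SimpleGraph

variable {α : Type*} {G : SimpleGraph α}

lemma Walk.sub_le_dist_getVert {u v : α} (w : G.Walk u v) (hw : w.length = G.dist u v)
    (i : ℕ) {j : ℕ} (hj : j ≤ w.length) :
    j - i ≤ G.dist (w.getVert i) (w.getVert j) := by
  have hi : G.dist u (w.getVert i) ≤ i :=
    (dist_le (w.take i)).trans ((w.take_length i).trans_le (min_le_left _ _))
  have hj' : G.dist (w.getVert j) v ≤ w.length - j :=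
    (dist_le (w.drop j)).trans_eq (w.drop_length j)
  have h₁ := (w.take i).reachable.dist_triangle_left v
  have h₂ := (w.drop j).reachable.dist_triangle_right (w.getVert i)
  omega

theorem hasInducedCycle_of_chordless_path {m : ℕ} {y : ℕ → α} {v : α}
    (hy : ∀ i ≤ m, ∀ j ≤ m, G.Adj (y i) (y j) ↔ i + 1 = j ∨ j + 1 = i)
    (hinj : ∀ i ≤ m, ∀ j ≤ m, y i = y j → i = j) (hyv : ∀ i ≤ m, y i ≠ v)
    (hv : ∀ i ≤ m, G.Adj v (y i) ↔ i = 0 ∨ i = m) :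
    HasInducedCycle G (m + 2) := by
  let f : Fin (m + 2) → α := fun i => if (i : ℕ) ≤ m then y i else v
  have hf : Function.Injective f := by
    intro i j hij
    have := i.2; have := j.2
    simp only [f] at hij
    split_ifs at hij with hi hj hj
    · exact Fin.ext (hinj _ hi _ hj hij)
    · exact absurd hij (hyv _ hi)
    · exact absurd hij.symm (hyv _ hj)
    · exact Fin.ext (by omega)
  refine ⟨⟨f, hf⟩, fun i j => ?_⟩
  have := i.2; have := j.2
  rw [Nat.add_one_mod_eq_iff i.2 j.2, Nat.add_one_mod_eq_iff j.2 i.2]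
  simp only [Function.Embedding.coeFn_mk, f]
  split_ifs with hi hj hj
  · rw [hy _ hi _ hj]; omega
  · rw [G.adj_comm, hv _ hi]; omega
  · rw [hv _ hj]; omega
  · simp only [SimpleGraph.irrefl, false_iff]; omega

theorem hasInducedCycle_of_geodesic {v : α} {A : Set α} (hvA : v ∉ A) {u₁ u₂ : A}
    (w : (G.induce A).Walk u₁ u₂) (hw : w.length = (G.induce A).dist u₁ u₂)
    (hv : ∀ i ≤ w.length, G.Adj v (w.getVert i) ↔ i = 0 ∨ i = w.length) :
    HasInducedCycle G (w.length + 2) := by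
  refine hasInducedCycle_of_chordless_path (y := fun i => w.getVert i) ?_ ?_
    (fun i _ (h : (w.getVert i : α) = v) => hvA (h ▸ (w.getVert i).2)) hv
  · intro i hi j hj
    constructor
    · intro hadj
      have hadj' : (G.induce A).Adj (w.getVert i) (w.getVert j) := hadj
      have h₁ := w.sub_le_dist_getVert hw i hj
      have h₂ := w.sub_le_dist_getVert hw j hi
      rw [dist_eq_one_iff_adj.mpr hadj'] at h₁
      rw [dist_eq_one_iff_adj.mpr hadj'.symm] at h₂
      have : i ≠ j := by rintro rfl; exact G.irrefl hadj
      omega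
    · rintro (rfl | rfl)
      · exact w.adj_getVert_succ (by omega)
      · exact (w.adj_getVert_succ (by omega)).symm
  · intro i hi j hj hij
    have h₁ := w.sub_le_dist_getVert hw i hj
    have h₂ := w.sub_le_dist_getVert hw j hi
    rw [Subtype.ext hij, dist_self] at h₁ h₂
    omega

theorem isClique_inter_neighborSet {v : α} (hcyc : ∀ k, 4 ≤ k → ¬ HasInducedCycle G k)
    (htrans : ∀ x y z, G.Adj v x → G.Adj v y → G.Adj v z → G.Adj x y → G.Adj y z → x ≠ z →
      G.Adj x z)
    {A : Set α} (hA : (G.induce A).Preconnected) (hvA : v ∉ A) :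
    G.IsClique (A ∩ G.neighborSet v) := by
  suffices key : ∀ d, ∀ u₁ u₂ : A, (G.induce A).dist u₁ u₂ = d → G.Adj v u₁ → G.Adj v u₂ →
      u₁ ≠ u₂ → G.Adj u₁ u₂ by
    rintro x ⟨hx, hvx⟩ y ⟨hy, hvy⟩ hxy
    exact key _ ⟨x, hx⟩ ⟨y, hy⟩ rfl hvx hvy (Subtype.coe_ne_coe.mp hxy)
  intro d
  induction d using Nat.strong_induction_on with
  | _ d ih =>
  intro u₁ u₂ hd hv₁ hv₂ hne
  obtain ⟨w, hw⟩ := (hA u₁ u₂).exists_walk_length_eq_dist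
  have hsep (i : ℕ) {j : ℕ} (hj : j ≤ d) := w.sub_le_dist_getVert hw i (hw.trans hd ▸ hj)
  rw [hd] at hw
  by_cases hmid : ∃ i, 0 < i ∧ i < d ∧ G.Adj v (w.getVert i)
  · obtain ⟨i, hi₀, hid, hvi⟩ := hmid
    have h₁ : G.Adj u₁ (w.getVert i) := by
      refine ih _ ?_ _ _ rfl hv₁ hvi fun h => ?_
      · exact ((dist_le (w.take i)).trans_eq (w.take_length i)).trans_lt (by omega)
      · have := hsep 0 hid.le
        rw [w.getVert_zero, ← h, dist_self] at this
        omega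
    have h₂ : G.Adj (w.getVert i) u₂ := by
      refine ih _ ?_ _ _ rfl hvi hv₂ fun h => ?_
      · exact ((dist_le (w.drop i)).trans_eq (w.drop_length i)).trans_lt (by omega)
      · have := hsep i le_rfl
        rw [← hw, w.getVert_length, h, dist_self] at this
        omega
    exact htrans _ _ _ hv₁ hvi hv₂ h₁ h₂ (Subtype.coe_ne_coe.mpr hne)
  obtain hd₁ | hd₂ : d = 1 ∨ 2 ≤ d := by
    have := (hA u₁ u₂).pos_dist_of_ne hne
    omega
  · exact (dist_eq_one_iff_adj (G := G.induce A)).mp (hd.trans hd₁)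
  refine (hcyc (w.length + 2) (by omega) (hasInducedCycle_of_geodesic hvA w (hw.trans hd.symm)
    fun i hi => ⟨fun hvi => ?_, ?_⟩)).elim
  · by_contra! hend
    exact hmid ⟨i, by omega, by omega, hvi⟩
  · rintro (rfl | rfl)
    · simpa using hv₁
    · simpa using hv₂

theorem IsClique.image_hom {β : Type*} {G' : SimpleGraph β} {s : Set α} (hs : G.IsClique s)
    (f : G →g G') : G'.IsClique (f '' s) := by
  rintro _ ⟨x, hx, rfl⟩ _ ⟨y, hy, rfl⟩ hxy
  exact f.map_adj (hs hx hy fun h => hxy (h ▸ rfl))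

end SimpleGraph

open SimpleGraph

namespace IsDisjUnionOfCompleteOfSize

variable {α : Type*} {G : SimpleGraph α} {v : α} {m : ℕ}

theorem adj_trans (h : IsDisjUnionOfCompleteOfSize (G.induce (G.neighborSet v)) m) {x y z : α}
    (hx : G.Adj v x) (hy : G.Adj v y) (hz : G.Adj v z) (hxy : G.Adj x y) (hyz : G.Adj y z)
    (hxz : x ≠ z) : G.Adj x z :=
  h.1 ⟨x, hx⟩ ⟨y, hy⟩ ⟨z, hz⟩ hxy hyz (Subtype.coe_ne_coe.mp hxz)

theorem ncard_insert_inter (h : IsDisjUnionOfCompleteOfSize (G.induce (G.neighborSet v)) m)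
    {q : α} (hq : G.Adj v q) :
    (insert q (G.neighborSet v ∩ G.neighborSet q)).ncard = m := by
  rw [← h.2 ⟨q, hq⟩, ← Set.ncard_image_of_injective _ Subtype.val_injective]
  congr 1
  ext x
  simp only [Set.mem_insert_iff, Set.mem_inter_iff, mem_neighborSet, comap_adj,
    Function.Embedding.subtype_apply, Set.mem_image, Set.mem_ofPred_eq, exists_eq_or_imp,
    Subtype.exists, exists_and_left, exists_prop, exists_eq_right_right]
  rw [@eq_comm _ x, and_comm]

theorem isClique_insert_inter (h : IsDisjUnionOfCompleteOfSize (G.induce (G.neighborSet v)) m)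
    {q : α} (hq : G.Adj v q) : G.IsClique (insert q (G.neighborSet v ∩ G.neighborSet q)) := by
  rw [isClique_insert]
  refine ⟨fun x ⟨hvx, hqx⟩ y ⟨hvy, hqy⟩ hxy => h.adj_trans hvx hq hvy hqx.symm hqy hxy,
    fun _ hb _ => hb.2⟩

theorem ncard_le_of_isClique [Finite α]
    (h : IsDisjUnionOfCompleteOfSize (G.induce (G.neighborSet v)) m) {s : Set α}
    (hs : G.IsClique s) (hsv : s ⊆ G.neighborSet v) : s.ncard ≤ m := by
  obtain rfl | ⟨a, ha⟩ := s.eq_empty_or_nonempty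
  · simp
  have hsub : s ⊆ insert a (G.neighborSet v ∩ G.neighborSet a) :=
    fun x hx => or_iff_not_imp_left.2 fun hxa => ⟨hsv hx, hs ha hx (Ne.symm hxa)⟩
  exact (Set.ncard_le_ncard hsub (Set.toFinite _)).trans_eq (h.ncard_insert_inter (hsv ha))

theorem exists_forall_adj_of_isClique [Finite α]
    (h : IsDisjUnionOfCompleteOfSize (G.induce (G.neighborSet v)) m)
    (hv : (G.neighborSet v).Nonempty) {T : Set α} (hT : G.IsClique T) (hvT : v ∈ T)
    (hTm : T.ncard ≤ m) : ∃ w, ∀ t ∈ T, G.Adj w t := by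
  obtain ⟨q, hq, hqT⟩ : ∃ q, G.Adj v q ∧ ∀ t ∈ T, t ≠ v → t = q ∨ G.Adj q t := by
    by_cases hTv : ∃ q ∈ T, q ≠ v
    · obtain ⟨q, hqT, hqv⟩ := hTv
      exact ⟨q, hT hvT hqT hqv.symm,
        fun t ht _ => or_iff_not_imp_left.2 fun htq => hT hqT ht (Ne.symm htq)⟩
    · push Not at hTv
      exact ⟨hv.some, hv.some_mem, fun t ht htv => absurd (hTv t ht) htv⟩
  -- the copy of `K_m` in the neighbourhood of `v` that contains `T \ {v}`
  set C := insert q (G.neighborSet v ∩ G.neighborSet q)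
  have hTC : T \ {v} ⊆ C := fun t ⟨ht, htv⟩ =>
    (hqT t ht htv).imp id fun hqt => ⟨hT hvT ht (Ne.symm htv), hqt⟩
  have hlt : (T \ {v}).ncard < C.ncard := by
    have hC : C.ncard = m := h.ncard_insert_inter hq
    have hCpos : 0 < C.ncard := (Set.ncard_pos (Set.toFinite C)).2 ⟨q, Set.mem_insert _ _⟩
    rw [Set.ncard_sdiff_singleton_of_mem hvT]
    omega
  obtain ⟨w, hwC, hwT⟩ := Set.exists_mem_notMem_of_ncard_lt_ncard hlt
  have hvw : G.Adj v w := hwC.elim (· ▸ hq) (·.1)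
  refine ⟨w, fun t ht => ?_⟩
  rcases eq_or_ne t v with rfl | htv
  · exact hvw.symm
  · exact h.isClique_insert_inter hq hwC (hTC ⟨ht, htv⟩) fun hwt => hwT (hwt ▸ ⟨ht, htv⟩)

end IsDisjUnionOfCompleteOfSize

namespace SimpleGraph

variable {α β : Type*} {G : SimpleGraph α} {G' : SimpleGraph β}

theorem exists_extend_induce_insert {A : Set α} {v : α} (hvA : v ∉ A) (φ : G.induce A →g G')
    {w : β} (hw : ∀ a : A, G.Adj v a → G'.Adj w (φ a)) :
    ∃ φ' : G.induce (insert v A) →g G', ∀ a : A, φ' ⟨a, Set.mem_insert_of_mem v a.2⟩ = φ a := by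
  classical
  refine ⟨⟨fun x => if hx : (x : α) ∈ A then φ ⟨x, hx⟩ else w, ?_⟩, fun a => dif_pos a.2⟩
  rintro ⟨x, rfl | hx⟩ ⟨y, rfl | hy⟩ hxy
  · exact absurd hxy G.irrefl
  · simpa [hvA, hy] using hw ⟨y, hy⟩ hxy
  · simpa [hvA, hx] using (hw ⟨x, hx⟩ hxy.symm).symm
  · simpa [hx, hy] using φ.map_adj (show (G.induce A).Adj ⟨x, hx⟩ ⟨y, hy⟩ from hxy)

theorem exists_hom_extension_of_connected [Finite α]
    (step : ∀ A : Set α, (G.induce A).Connected → A ≠ Set.univ → ∀ φ : G.induce A →g G',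
      ∃ v ∉ A, (G.induce (insert v A)).Connected ∧
        ∃ φ' : G.induce (insert v A) →g G', ∀ a : A, φ' ⟨a, Set.mem_insert_of_mem v a.2⟩ = φ a)
    {A : Set α} (hA : (G.induce A).Connected) (φ : G.induce A →g G') :
    ∃ ψ : G →g G', ∀ a : A, ψ a = φ a := by
  induction hk : Aᶜ.ncard generalizing A with
  | zero =>
    obtain rfl : A = Set.univ := by
      simpa [Set.ncard_eq_zero (Set.toFinite _)] using hk
    exact ⟨⟨fun x => φ ⟨x, trivial⟩, fun h => φ.map_adj h⟩, fun _ => rfl⟩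
  | succ k ih =>
    have hAu : A ≠ Set.univ := by rintro rfl; simp at hk
    obtain ⟨v, hvA, hA', φ', hφ'⟩ := step A hA hAu φ
    have hk' : (insert v A)ᶜ.ncard = k := by
      rw [Set.insert_eq, Set.compl_union, ← Set.sdiff_eq_compl_inter,
        Set.ncard_sdiff_singleton_of_mem hvA, hk, Nat.add_sub_cancel]
    obtain ⟨ψ, hψ⟩ := ih hA' φ' hk'
    exact ⟨ψ, fun a => (hψ ⟨a, Set.mem_insert_of_mem v a.2⟩).trans (hφ' a)⟩

theorem exists_connected_insert_extension [Finite α] {n : ℕ} (hconn : G.Connected)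
    (hcyc : ∀ k, 4 ≤ k → ¬ HasInducedCycle G k)
    (hnbr : ∀ v : α, IsDisjUnionOfCompleteOfSize (G.induce (G.neighborSet v)) (n - 1))
    {A : Set α} (hA : (G.induce A).Connected) (hAu : A ≠ Set.univ) (φ : G.induce A →g G) :
    ∃ v ∉ A, (G.induce (insert v A)).Connected ∧
      ∃ φ' : G.induce (insert v A) →g G, ∀ a : A, φ' ⟨a, Set.mem_insert_of_mem v a.2⟩ = φ a := by
  obtain ⟨⟨a₀, ha₀⟩⟩ := hA.nonempty
  obtain ⟨b, hb⟩ := (Set.ne_univ_iff_exists_notMem A).mp hAu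
  obtain ⟨⟨⟨a, v⟩, hav⟩, -, ha, hvA⟩ := (hconn a₀ b).some.exists_boundary_dart A ha₀ hb
  have hclique : G.IsClique (A ∩ G.neighborSet v) :=
    isClique_inter_neighborSet hcyc (fun _ _ _ => (hnbr v).adj_trans) hA.preconnected hvA
  set T := φ '' (Subtype.val ⁻¹' G.neighborSet v)
  have hS : (G.induce A).IsClique (Subtype.val ⁻¹' G.neighborSet v) :=
    fun x hx y hy hxy => hclique ⟨x.2, hx⟩ ⟨y.2, hy⟩ (Subtype.coe_ne_coe.mpr hxy)
  have hT : G.IsClique T := hS.image_hom φ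
  have hTn : T.ncard ≤ n - 1 :=
    calc T.ncard ≤ (Subtype.val ⁻¹' G.neighborSet v : Set A).ncard :=
          Set.ncard_image_le (Set.toFinite _)
      _ = (A ∩ G.neighborSet v).ncard := by
        rw [← Set.ncard_image_of_injective _ Subtype.val_injective, Subtype.image_preimage_coe]
      _ ≤ n - 1 := (hnbr v).ncard_le_of_isClique hclique Set.inter_subset_right
  have hpT : φ ⟨a, ha⟩ ∈ T := ⟨⟨a, ha⟩, hav.symm, rfl⟩
  have : Nontrivial α := ⟨⟨a, v, hav.ne⟩⟩
  obtain ⟨w, hw⟩ := (hnbr _).exists_forall_adj_of_isClique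
    (hconn.preconnected.exists_adj_of_nontrivial _) hT hpT hTn
  refine ⟨v, hvA, ?_, exists_extend_induce_insert hvA φ fun x hvx => hw _ ⟨x, hvx, rfl⟩⟩
  rw [Set.insert_eq]
  exact connected_induce_union .of_subsingleton hA.preconnected rfl ha hav.symm

end SimpleGraph

theorem treelike_isCHH_general {α : Type*} [Fintype α] (G : SimpleGraph α)
    (n : ℕ) (hconn : G.Connected)
    (hcyc : ∀ k, 4 ≤ k → ¬ HasInducedCycle G k)
    (hnbr : ∀ v : α,
      IsDisjUnionOfCompleteOfSize (G.induce (G.neighborSet v)) (n - 1)) :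
    IsCHH G := fun _ _ hA φ =>
  SimpleGraph.exists_hom_extension_of_connected
    (fun _ hB hBu ψ => SimpleGraph.exists_connected_insert_extension hconn hcyc hnbr hB hBu ψ) hA φ

/-- Every `K_n`-treelike finite connected graph (`n ≥ 2`) is C-HH.  Here we use
the characterisation: a finite connected graph is `K_n`-treelike iff every
induced cycle is a triangle and the neighbourhood of every vertex is a
disjoint union of copies of `K_{n-1}`. -/
theorem treelike_isCHH {α : Type*} [Fintype α] (G : SimpleGraph α)
    (n : ℕ) (hn : 2 ≤ n) (hconn : G.Connected)
    (hcyc : ∀ k, 4 ≤ k → ¬ HasInducedCycle G k)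
    (hnbr : ∀ v : α,
      IsDisjUnionOfCompleteOfSize (G.induce (G.neighborSet v)) (n - 1)) :
    IsCHH G :=
  treelike_isCHH_general G n hconn hcyc hnbr
end

section
/- Let G be a finite graph in which every induced cycle is a square (induced 4-cycle) and the two-squares graph (a 6-cycle with one diagonal) does not embed as an induced subgraph. Then for any connected induced subgraph A of G and any vertex v, any two vertices of N(v) ∩ A have a common neighbour lying in A. -/
/-- The two-squares graph: a 6-cycle `1 2 3 4 5 6 1` with the diagonal `3 6`
(0-indexed: edges 01,12,23,34,45,50 and chord 25). -/
def twoSquares : SimpleGraph (Fin 6) :=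
  SimpleGraph.fromRel (fun i j =>
    (i = 0 ∧ j = 1) ∨ (i = 1 ∧ j = 2) ∨ (i = 2 ∧ j = 3) ∨ (i = 3 ∧ j = 4) ∨
    (i = 4 ∧ j = 5) ∨ (i = 5 ∧ j = 0) ∨ (i = 2 ∧ j = 5))

structure IsInducedPath {α : Type*} (G : SimpleGraph α) (x : ℕ → α) (n : ℕ) : Prop where
  injOn : Set.InjOn x (Set.Iic n)
  adj_iff : ∀ ⦃i⦄, i ≤ n → ∀ ⦃j⦄, j ≤ n → (G.Adj (x i) (x j) ↔ i + 1 = j ∨ j + 1 = i)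

namespace SimpleGraph.Walk

variable {α : Type*} {G : SimpleGraph α} {u v : α} {p : G.Walk u v}

lemma sub_le_dist_getVert_of_length_eq_dist (hp : p.length = G.dist u v) {i j : ℕ}
    (hj : j ≤ p.length) : j - i ≤ G.dist (p.getVert i) (p.getVert j) := by
  have hi : G.dist u (p.getVert i) ≤ i := (dist_le (p.take i)).trans (by simp [take_length])
  have hj' : G.dist (p.getVert j) v ≤ p.length - j :=
    (dist_le (p.drop j)).trans (by simp [drop_length])
  have := (p.take i).reachable.dist_triangle_left v
  have := (p.drop j).reachable.dist_triangle_right (p.getVert i)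
  omega

lemma isInducedPath_of_length_eq_dist (hp : p.length = G.dist u v) :
    IsInducedPath G p.getVert p.length where
  injOn i hi j hj hij := by
    have hji := sub_le_dist_getVert_of_length_eq_dist (i := j) hp hi
    have hij' := sub_le_dist_getVert_of_length_eq_dist (i := i) hp hj
    rw [hij, dist_self] at hji hij'
    omega
  adj_iff i hi j hj := by
    constructor
    · intro hadj
      have hji := sub_le_dist_getVert_of_length_eq_dist (i := j) hp hi
      have hij := sub_le_dist_getVert_of_length_eq_dist (i := i) hp hj
      rw [dist_comm, dist_eq_one_iff_adj.2 hadj] at hji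
      rw [dist_eq_one_iff_adj.2 hadj] at hij
      have : i ≠ j := by rintro rfl; exact hadj.ne rfl
      omega
    · rintro (rfl | rfl)
      · exact p.adj_getVert_succ (by omega)
      · exact (p.adj_getVert_succ (by omega)).symm

end SimpleGraph.Walk

namespace IsInducedPath

variable {α β : Type*} {G : SimpleGraph α} {x : ℕ → α} {n : ℕ} {v : α}

lemma map {H : SimpleGraph β} {y : ℕ → β} (h : IsInducedPath H y n) (f : H ↪g G) :
    IsInducedPath G (f ∘ y) n where
  injOn := f.injective.comp_injOn h.injOn
  adj_iff _ hi _ hj := f.map_adj_iff.trans (h.adj_iff hi hj)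

lemma mono (h : IsInducedPath G x n) {m : ℕ} (hm : m ≤ n) : IsInducedPath G x m where
  injOn := h.injOn.mono (Set.Iic_subset_Iic.2 hm)
  adj_iff _ hi _ hj := h.adj_iff (hi.trans hm) (hj.trans hm)

lemma shift (h : IsInducedPath G x n) {k : ℕ} (hk : k ≤ n) :
    IsInducedPath G (fun i => x (i + k)) (n - k) where
  injOn i (hi : i ≤ n - k) j (hj : j ≤ n - k) hij := by
    have := h.injOn (show i + k ≤ n by omega) (show j + k ≤ n by omega) hij
    omega
  adj_iff i hi j hj := by rw [h.adj_iff (by omega) (by omega)]; omega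


theorem hasInducedCycle_of_adj_iff (h : IsInducedPath G x n) (hv : ∀ i ≤ n, v ≠ x i)
    (hadj : ∀ i ≤ n, G.Adj v (x i) ↔ i = 0 ∨ i = n) : HasInducedCycle G (n + 2) := by
  classical
  let f : ℕ → α := fun i => if i ≤ n then x i else v
  have succ_mod : ∀ i < n + 2, (i + 1) % (n + 2) = if i ≤ n then i + 1 else 0 := by
    intro i hi
    split_ifs with hin
    · exact Nat.mod_eq_of_lt (by omega)
    · rw [show i + 1 = n + 2 by omega, Nat.mod_self]
  refine ⟨⟨fun i => f i, fun i j hij => ?_⟩, fun i j => ?_⟩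
  · simp only [f] at hij
    split_ifs at hij with hi hj hj
    · exact Fin.ext (h.injOn hi hj hij)
    · exact absurd hij.symm (hv _ hi)
    · exact absurd hij (hv _ hj)
    · exact Fin.ext (by omega)
  · show G.Adj (f i) (f j) ↔ _
    simp only [f, succ_mod i i.isLt, succ_mod j j.isLt]
    split_ifs with hi hj hj
    · exact h.adj_iff hi hj
    · rw [G.adj_comm, hadj _ hi]; omega
    · rw [hadj _ hj]; omega
    · simp only [SimpleGraph.irrefl, false_iff]; omega


lemma ne_of_adj_of_adj (h : IsInducedPath G x n) (hn : n ≠ 2) (h0 : G.Adj v (x 0))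
    (hn' : G.Adj v (x n)) : ∀ i ≤ n, v ≠ x i := by
  rintro i hi rfl
  have := (h.adj_iff hi (Nat.zero_le n)).1 h0
  have := (h.adj_iff hi le_rfl).1 hn'
  omega

theorem adj_two_of_adj_of_adj (hsq : ∀ k, 3 ≤ k → k ≠ 4 → ¬ HasInducedCycle G k)
    (h : IsInducedPath G x n) (hn : 1 ≤ n) (hv : ∀ i ≤ n, v ≠ x i)
    (h0 : G.Adj v (x 0)) (hn' : G.Adj v (x n)) :
    2 ≤ n ∧ ¬ G.Adj v (x 1) ∧ G.Adj v (x 2) := by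
  classical
  have hex : ∃ m, 1 ≤ m ∧ m ≤ n ∧ G.Adj v (x m) := ⟨n, hn, le_rfl, hn'⟩
  obtain ⟨m, ⟨hm1, hmn, hm⟩, hmin⟩ : ∃ m, (1 ≤ m ∧ m ≤ n ∧ G.Adj v (x m)) ∧
      ∀ k < m, ¬ (1 ≤ k ∧ k ≤ n ∧ G.Adj v (x k)) :=
    ⟨Nat.find hex, Nat.find_spec hex, fun _ => Nat.find_min hex⟩
  have hfirst : ∀ i ≤ m, G.Adj v (x i) ↔ i = 0 ∨ i = m := by
    intro i hi
    rcases Nat.eq_zero_or_pos i with rfl | hi0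
    · simpa using h0
    rcases hi.lt_or_eq with hi | rfl
    · simpa [hi.ne, hi0.ne'] using fun hvi => hmin i hi ⟨hi0, by omega, hvi⟩
    · simpa using hm
  have hm2 : m = 2 := by
    by_contra hm2
    exact hsq (m + 2) (by omega) (by omega) <|
      (h.mono hmn).hasInducedCycle_of_adj_iff (fun i hi => hv i (hi.trans hmn)) hfirst
  subst hm2
  exact ⟨hmn, fun h1 => hmin 1 one_lt_two ⟨le_rfl, by omega, h1⟩, hm⟩

theorem nonempty_twoSquares_embedding (h : IsInducedPath G x 4) (hv : ∀ i ≤ 4, v ≠ x i)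
    (h0 : G.Adj v (x 0)) (h1 : ¬ G.Adj v (x 1)) (h2 : G.Adj v (x 2)) (h3 : ¬ G.Adj v (x 3))
    (h4 : G.Adj v (x 4)) : Nonempty (twoSquares ↪g G) := by
  let f : Fin 6 → α := ![x 0, x 1, x 2, x 3, x 4, v]
  have hf_inj : Function.Injective f := by
    intro a b hab
    fin_cases a <;> fin_cases b <;> simp [f, h.injOn.eq_iff] at hab ⊢
    all_goals first | exact hv _ (by norm_num) hab | exact hv _ (by norm_num) hab.symm
  have hf_adj : ∀ a b, G.Adj (f a) (f b) ↔ twoSquares.Adj a b := by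
    intro a b
    rw [twoSquares, SimpleGraph.fromRel_adj]
    fin_cases a <;> fin_cases b <;> simp [f, h.adj_iff, G.adj_comm (x _) v, h0, h1, h2, h3, h4]
  exact ⟨⟨⟨f, hf_inj⟩, hf_adj _ _⟩⟩

end IsInducedPath

theorem common_neighbour_in_A_general {α : Type*} (G : SimpleGraph α)
    (hsq : ∀ k, 3 ≤ k → k ≠ 4 → ¬ HasInducedCycle G k)
    (hts : IsEmpty (twoSquares ↪g G))
    (A : Set α) (hA : (G.induce A).Connected) (v : α)
    (a₁ a₂ : α) (h₁ : a₁ ∈ A) (h₂ : a₂ ∈ A)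
    (hv₁ : G.Adj v a₁) (hv₂ : G.Adj v a₂) (hne : a₁ ≠ a₂) :
    ∃ x ∈ A, G.Adj x a₁ ∧ G.Adj x a₂ := by
  obtain ⟨p, hp⟩ := hA.exists_walk_length_eq_dist ⟨a₁, h₁⟩ ⟨a₂, h₂⟩
  set d := p.length
  let x : ℕ → α := fun i => p.getVert i
  have hx : IsInducedPath G x d :=
    (p.isInducedPath_of_length_eq_dist hp).map (SimpleGraph.Embedding.induce A)
  have hx₀ : x 0 = a₁ := by simp [x]
  have hx_d : x d = a₂ := by simp [x, d]
  have hd : d ≠ 0 := fun hd => hne (by rw [← hx₀, ← hx_d, hd])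
  by_cases hd_eq_two : d = 2
  · refine ⟨x 1, (p.getVert 1).2, ?_, ?_⟩
    · rw [← hx₀, hx.adj_iff (by omega) (by omega)]; omega
    · rw [← hx_d, hx.adj_iff (by omega) (by omega)]; omega
  rw [← hx₀] at hv₁
  rw [← hx_d] at hv₂
  have hv := hx.ne_of_adj_of_adj hd_eq_two hv₁ hv₂
  obtain ⟨hd_two, hvx₁, hvx₂⟩ := hx.adj_two_of_adj_of_adj hsq (by omega) hv hv₁ hv₂
  obtain ⟨hd_four, hvx₃, hvx₄⟩ := (hx.shift hd_two).adj_two_of_adj_of_adj hsq (by omega)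
    (fun i _ => hv _ (by omega)) hvx₂ (by rwa [Nat.sub_add_cancel hd_two])
  obtain ⟨e⟩ := (hx.mono (by omega : 4 ≤ d)).nonempty_twoSquares_embedding
    (fun i hi => hv i (by omega)) hv₁ hvx₁ hvx₂ hvx₃ hvx₄
  exact hts.elim e

/-- In a finite graph in which every induced cycle is a square and the
two-squares graph does not embed as an induced subgraph, for every connected
induced subgraph `A` and vertex `v`, any two vertices of `N(v) ∩ A` have a
common neighbour lying in `A`. -/
theorem common_neighbour_in_A {α : Type*} [Fintype α] (G : SimpleGraph α)
    (hsq : ∀ k, 3 ≤ k → k ≠ 4 → ¬ HasInducedCycle G k)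
    (hts : IsEmpty (twoSquares ↪g G))
    (A : Set α) (hA : (G.induce A).Connected) (v : α)
    (a₁ a₂ : α) (h₁ : a₁ ∈ A) (h₂ : a₂ ∈ A)
    (hv₁ : G.Adj v a₁) (hv₂ : G.Adj v a₂) (hne : a₁ ≠ a₂) :
    ∃ x ∈ A, G.Adj x a₁ ∧ G.Adj x a₂ :=
  common_neighbour_in_A_general G hsq hts A hA v a₁ a₂ h₁ h₂ hv₁ hv₂ hne
end

section
/- Let G be a finite graph with no odd induced cycles in which C₆ does not embed as an induced subgraph. If S is a finite independent set of vertices of size k+1 (k ≥ 2) such that every k-subset of S has a common neighbour but S itself has no common neighbour, then G contains an induced copy of the bipartite complement of a perfect matching on parts of size k+1, and in particular an induced 6-cycle — contradiction. Hence in such a graph, if every pair of vertices in an independent set S has a common neighbour and the above iteration applies, then all of S has a common neighbour. -/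
open SimpleGraph

theorem HasInducedCycle.map {α β : Type*} {G : SimpleGraph α} {H : SimpleGraph β} {k : ℕ}
    (e : G ↪g H) (h : HasInducedCycle G k) : HasInducedCycle H k := by
  obtain ⟨f, hf⟩ := h
  exact ⟨f.trans e.toEmbedding, fun i j => e.map_adj_iff.trans (hf i j)⟩

namespace SimpleGraph

variable {α ι κ : Type*} {G : SimpleGraph α}

theorem hasInducedCycle_three_completeGraph : HasInducedCycle (completeGraph (Fin 3)) 3 :=
  ⟨Function.Embedding.refl _, by decide⟩

theorem cliqueFree_three_of_not_hasInducedCycle (h : ¬HasInducedCycle G 3) : G.CliqueFree 3 := by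
  by_contra hG
  exact h (hasInducedCycle_three_completeGraph.map (topEmbeddingOfNotCliqueFree hG))

/-- The crown graph on `ι ⊕ ι`, i.e. the bipartite complement of the perfect matching
`inl i — inr i`. -/
def crownGraph (ι : Type*) : SimpleGraph (ι ⊕ ι) where
  Adj
    | .inl i, .inr j => i ≠ j
    | .inr i, .inl j => i ≠ j
    | _, _ => False
  symm := ⟨by rintro (i | i) (j | j) h <;> simp_all [eq_comm]⟩
  loopless := ⟨by rintro (i | i) h <;> simp_all⟩

instance [DecidableEq ι] : DecidableRel (crownGraph ι).Adj := by
  rintro (i | i) (j | j) <;> dsimp [crownGraph] <;> infer_instance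

def Embedding.crownGraph (e : ι ↪ κ) : crownGraph ι ↪g crownGraph κ where
  toEmbedding := e.sumMap e
  map_rel_iff' := by
    rintro (i | i) (j | j) <;> simp [SimpleGraph.crownGraph]

theorem hasInducedCycle_six_crownGraph_fin_three : HasInducedCycle (crownGraph (Fin 3)) 6 :=
  ⟨⟨![.inl 0, .inr 1, .inl 2, .inr 0, .inl 1, .inr 2], by decide⟩, by decide⟩

theorem hasInducedCycle_six_crownGraph [Fintype ι] (hι : 3 ≤ Fintype.card ι) :
    HasInducedCycle (crownGraph ι) 6 := by
  obtain ⟨e⟩ := Function.Embedding.nonempty_of_card_le (α := Fin 3) (by simpa using hι)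
  exact hasInducedCycle_six_crownGraph_fin_three.map (Embedding.crownGraph e)

def crownGraphEmbedding [Fintype ι] (hι : 3 ≤ Fintype.card ι) (hG : G.CliqueFree 3)
    (s : ι ↪ α) (w : ι → α) (hs : ∀ i j, ¬G.Adj (s i) (s j))
    (hw : ∀ i j, G.Adj (w i) (s j) ↔ i ≠ j) : crownGraph ι ↪g G :=
  have hl : ∀ i j : ι, ∃ l, l ≠ i ∧ l ≠ j :=
    ENat.exists_ne_ne_of_three_le (by simpa [ENat.card_eq_coe_fintype_card] using hι)
  have hsw (i j : ι) : s i ≠ w j := fun h => by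
    obtain ⟨l, hlj, -⟩ := hl j j
    exact hs i l (h ▸ (hw j l).2 hlj.symm)
  have hww (i j : ι) : ¬G.Adj (w i) (w j) := fun h => by
    classical
    obtain ⟨l, hli, hlj⟩ := hl i j
    exact hG {w i, w j, s l} (is3Clique_triple_iff.2 ⟨h, (hw i l).2 hli.symm, (hw j l).2 hlj.symm⟩)
  { toFun := Sum.elim s w
    inj' := by
      rintro (i | i) (j | j) h
      · exact congrArg _ (s.injective h)
      · exact (hsw i j h).elim
      · exact (hsw j i h.symm).elim
      · have h : w i = w j := h
        by_contra hij
        exact (hw j j).1 (h ▸ (hw i j).2 fun e => hij (congrArg _ e)) rfl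
    map_rel_iff' := by
      rintro (i | i) (j | j)
      · exact iff_of_false (hs i j) id
      · exact G.adj_comm _ _ |>.trans ((hw j i).trans ne_comm)
      · exact hw i j
      · exact iff_of_false (hww i j) id }

theorem exists_adj_iff_ne_of_not_exists_common_neighbour {k : ℕ} (S : Finset α)
    (hcard : S.card = k + 1) (hsub : ∀ T ⊆ S, T.card = k → ∃ w, ∀ x ∈ T, G.Adj w x)
    (hS : ¬∃ w, ∀ x ∈ S, G.Adj w x) : ∃ w : S → α, ∀ i j : S, G.Adj (w i) j ↔ i ≠ j := by
  classical
  suffices ∀ i : S, ∃ v, ∀ j : S, G.Adj v j ↔ i ≠ j from Classical.skolem.mp this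
  intro i
  obtain ⟨v, hv⟩ := hsub (S.erase i) (S.erase_subset _)
    (by rw [Finset.card_erase_of_mem i.2, hcard]; rfl)
  have hvS (x : α) (hx : x ∈ S) (hxi : x ≠ i) : G.Adj v x := hv x (Finset.mem_erase.2 ⟨hxi, hx⟩)
  refine ⟨v, fun j => ⟨?_, fun hij => hvS j j.2 (Subtype.coe_ne_coe.2 hij.symm)⟩⟩
  rintro hvj rfl
  exact hS ⟨v, fun x hx => if hxi : x = i then hxi ▸ hvj else hvS x hx hxi⟩

end SimpleGraph

theorem common_neighbour_of_whole_set_general {α : Type*}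
    (G : SimpleGraph α)
    (hodd : ∀ m, 3 ≤ m → Odd m → ¬ HasInducedCycle G m)
    (h6 : ¬ HasInducedCycle G 6)
    (k : ℕ) (hk : 2 ≤ k) (S : Finset α) (hcard : S.card = k + 1)
    (hind : ∀ x ∈ S, ∀ y ∈ S, ¬ G.Adj x y)
    (hsub : ∀ T ⊆ S, T.card = k → ∃ w, ∀ x ∈ T, G.Adj w x) :
    ∃ w, ∀ x ∈ S, G.Adj w x := by
  by_contra hS
  obtain ⟨w, hw⟩ := exists_adj_iff_ne_of_not_exists_common_neighbour S hcard hsub hS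
  have hS3 : 3 ≤ Fintype.card S := by rw [Fintype.card_coe, hcard]; omega
  have hG : G.CliqueFree 3 := cliqueFree_three_of_not_hasInducedCycle (hodd 3 le_rfl (by decide))
  exact h6 <| (hasInducedCycle_six_crownGraph hS3).map <|
    crownGraphEmbedding hS3 hG (.subtype _) w (fun i j => hind i i.2 j j.2) hw

/-- In a finite graph with no odd induced cycles and no induced 6-cycle, if
`S` is an independent set of size `k + 1` (`k ≥ 2`) such that every `k`-subset
of `S` has a common neighbour, then `S` itself has a common neighbour
(otherwise the distinct common neighbours together with `S` would form an
induced copy of the bipartite complement of a perfect matching, hence an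
induced 6-cycle). -/
theorem common_neighbour_of_whole_set {α : Type*} [Fintype α]
    (G : SimpleGraph α)
    (hodd : ∀ m, 3 ≤ m → Odd m → ¬ HasInducedCycle G m)
    (h6 : ¬ HasInducedCycle G 6)
    (k : ℕ) (hk : 2 ≤ k) (S : Finset α) (hcard : S.card = k + 1)
    (hind : ∀ x ∈ S, ∀ y ∈ S, ¬ G.Adj x y)
    (hsub : ∀ T ⊆ S, T.card = k → ∃ w, ∀ x ∈ T, G.Adj w x) :
    ∃ w, ∀ x ∈ S, G.Adj w x :=
  common_neighbour_of_whole_set_general G hodd h6 k hk S hcard hind hsub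
end

section
/- Let G be a finite bipartite graph with parts X, Y where |Y| ≤ |X|, and let d = Δ(G) ≥ 2 be the maximum degree. If |X| > d and every d-subset of X has a common neighbour in Y, then |X| = |Y|, d = |X| − 1, and G is the bipartite complement of a perfect matching. -/
lemma my_choose_gt (d : ℕ) (hd : 2 ≤ d) : ∀ n, d + 2 ≤ n → n < n.choose d := by
  intro n
  induction n with
  | zero => omega
  | succ n ih =>
    intro hdn
    rcases Nat.lt_or_ge n (d + 2) with h | h
    · have hd1 : d = (n + 1) - 2 := by omega
      have hs : (n + 1).choose ((n+1) - 2) = (n + 1).choose 2 :=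
        Nat.choose_symm (by omega)
      have hm := Nat.add_one_mul_choose_eq n 1
      simp [Nat.choose_one_right] at hm
      have h3 : (n + 1) * 3 ≤ (n + 1) * n := Nat.mul_le_mul_left _ (by omega)
      rw [hd1, hs]
      omega
    · have h1 := ih h
      have pascal : (n + 1).choose d = n.choose (d - 1) + n.choose d := by
        cases d with
        | zero => omega
        | succ k => simp [Nat.choose_succ_succ]
      have h2 : 0 < n.choose (d - 1) := Nat.choose_pos (by omega)
      omega

/-- Let `G` be a finite bipartite graph with parts `X`, `Y` where `|Y| ≤ |X|`,
and let `d = Δ(G) ≥ 2` be the maximum degree.  If `|X| > d` and every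
`d`-subset of `X` has a common neighbour in `Y`, then `|X| = |Y|`,
`d = |X| − 1`, and `G` is the bipartite complement of a perfect matching. -/
theorem bipartite_complement_of_perfect_matching {α : Type*} [Fintype α]
    (G : SimpleGraph α) (X Y : Finset α)
    (hdisj : Disjoint X Y) (hcover : ∀ v, v ∈ X ∨ v ∈ Y)
    (hacross : ∀ u v, G.Adj u v → (u ∈ X ∧ v ∈ Y) ∨ (u ∈ Y ∧ v ∈ X))
    (hYX : Y.card ≤ X.card)
    (d : ℕ) (hd2 : 2 ≤ d)
    (hdub : ∀ v, (G.neighborSet v).ncard ≤ d)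
    (hdmax : ∃ v, (G.neighborSet v).ncard = d)
    (hXd : d < X.card)
    (hcn : ∀ T ⊆ X, T.card = d → ∃ y ∈ Y, ∀ x ∈ T, G.Adj y x) :
    X.card = Y.card ∧ d = X.card - 1 ∧
      ∃ f : {x // x ∈ X} ≃ {y // y ∈ Y},
        ∀ (x : {x // x ∈ X}) (y : {y // y ∈ Y}),
          G.Adj x.1 y.1 ↔ y ≠ f x := by
  classical
  -- degree as finset card
  have hdeg : ∀ v : α, (G.neighborFinset v).card ≤ d := by
    intro v
    have := hdub v
    rwa [Set.ncard_eq_toFinset_card'] at this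
  have hNsub : ∀ y ∈ Y, G.neighborFinset y ⊆ X := by
    intro y hy v hv
    rw [SimpleGraph.mem_neighborFinset] at hv
    rcases hacross y v hv with ⟨hyX, _⟩ | ⟨_, hvX⟩
    · exact absurd hyX (Finset.disjoint_right.mp hdisj hy)
    · exact hvX
  have hne : Nonempty α := by
    rcases Finset.card_pos.mp (show 0 < X.card by omega) with ⟨a, _⟩
    exact ⟨a⟩
  set P := X.powersetCard d with hP
  have key : ∀ T : Finset α, ∃ y : α, T ∈ P → y ∈ Y ∧ G.neighborFinset y = T := by
    intro T
    by_cases hT : T ∈ P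
    · rw [Finset.mem_powersetCard] at hT
      obtain ⟨y, hyY, hyadj⟩ := hcn T hT.1 hT.2
      refine ⟨y, fun _ => ⟨hyY, ?_⟩⟩
      have hsub : T ⊆ G.neighborFinset y := by
        intro x hx
        rw [SimpleGraph.mem_neighborFinset]
        exact hyadj x hx
      exact (Finset.eq_of_subset_of_card_le hsub (by rw [hT.2]; exact hdeg y)).symm
    · exact ⟨Classical.arbitrary α, fun h => absurd h hT⟩
  choose g hg using key
  have hgY : ∀ T ∈ P, g T ∈ Y := fun T hT => (hg T hT).1
  have hgN : ∀ T ∈ P, G.neighborFinset (g T) = T := fun T hT => (hg T hT).2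
  have hinj : Set.InjOn g ↑P := by
    intro T1 h1 T2 h2 he
    rw [← hgN T1 h1, ← hgN T2 h2, he]
  have hcard : P.card ≤ Y.card :=
    Finset.card_le_card_of_injOn g hgY hinj
  have hPcard : P.card = X.card.choose d := Finset.card_powersetCard d X
  -- d = X.card - 1
  have hdval : d = X.card - 1 := by
    by_contra hne'
    have : d + 2 ≤ X.card := by omega
    have := my_choose_gt d hd2 X.card this
    omega
  have hchoose : X.card.choose d = X.card := by
    rw [hdval]
    have h1 : X.card - 1 = X.card - 1 := rfl
    have := Nat.choose_symm (show 1 ≤ X.card by omega)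
    rw [this, Nat.choose_one_right]
  have hYcard : Y.card = X.card := by omega
  refine ⟨hYcard.symm, hdval, ?_⟩
  -- image of g covers Y
  have himg : P.image g = Y := by
    apply Finset.eq_of_subset_of_card_le
    · intro y hy
      obtain ⟨T, hT, rfl⟩ := Finset.mem_image.mp hy
      exact hgY T hT
    · rw [Finset.card_image_of_injOn hinj]
      omega
  have hNall : ∀ y ∈ Y, G.neighborFinset y ∈ P := by
    intro y hy
    rw [← himg] at hy
    obtain ⟨T, hT, rfl⟩ := Finset.mem_image.mp hy
    rw [hgN T hT]; exact hT
  have hNinj : ∀ y1 ∈ Y, ∀ y2 ∈ Y,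
      G.neighborFinset y1 = G.neighborFinset y2 → y1 = y2 := by
    intro y1 hy1 y2 hy2 hN
    rw [← himg] at hy1 hy2
    obtain ⟨T1, hT1, rfl⟩ := Finset.mem_image.mp hy1
    obtain ⟨T2, hT2, rfl⟩ := Finset.mem_image.mp hy2
    rw [hgN T1 hT1, hgN T2 hT2] at hN
    rw [hN]
  -- the unique non-neighbour
  have hsd : ∀ y ∈ Y, (X \ G.neighborFinset y).card = 1 := by
    intro y hy
    have h := hNall y hy
    rw [Finset.mem_powersetCard] at h
    rw [Finset.card_sdiff_of_subset h.1, h.2]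
    omega
  have key2 : ∀ y : α, ∃ a : α, y ∈ Y → X \ G.neighborFinset y = {a} := by
    intro y
    by_cases hy : y ∈ Y
    · obtain ⟨a, ha⟩ := Finset.card_eq_one.mp (hsd y hy)
      exact ⟨a, fun _ => ha⟩
    · exact ⟨Classical.arbitrary α, fun h => absurd h hy⟩
  choose m hm using key2
  have hmX : ∀ y : {y // y ∈ Y}, m y.1 ∈ X := by
    intro y
    have := hm y.1 y.2
    have : m y.1 ∈ X \ G.neighborFinset y.1 := by rw [this]; simp
    exact (Finset.mem_sdiff.mp this).1
  have hNeq : ∀ y ∈ Y, G.neighborFinset y = X \ {m y} := by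
    intro y hy
    have h1 := hm y hy
    have h2 := (Finset.mem_powersetCard.mp (hNall y hy)).1
    rw [← h1, Finset.sdiff_sdiff_eq_self h2]
  set e : {y // y ∈ Y} → {x // x ∈ X} := fun y => ⟨m y.1, hmX y⟩ with he
  have heinj : Function.Injective e := by
    intro y1 y2 h12
    have hmm : m y1.1 = m y2.1 := congrArg Subtype.val h12
    apply Subtype.ext
    apply hNinj y1.1 y1.2 y2.1 y2.2
    rw [hNeq y1.1 y1.2, hNeq y2.1 y2.2, hmm]
  have hcards : Fintype.card {y // y ∈ Y} = Fintype.card {x // x ∈ X} := by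
    rw [Fintype.card_coe, Fintype.card_coe, hYcard]
  have hebij : Function.Bijective e :=
    (Fintype.bijective_iff_injective_and_card e).mpr ⟨heinj, hcards⟩
  set E := Equiv.ofBijective e hebij with hE
  refine ⟨E.symm, ?_⟩
  intro x y
  have hadj : G.Adj x.1 y.1 ↔ x.1 ∈ G.neighborFinset y.1 := by
    rw [SimpleGraph.mem_neighborFinset, G.adj_comm]
  rw [hadj, hNeq y.1 y.2, Finset.mem_sdiff]
  simp only [Finset.mem_singleton]
  constructor
  · rintro ⟨_, hxm⟩ hyfx
    apply hxm
    have : E y = x := by rw [hyfx]; simp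
    have : (E y).1 = x.1 := congrArg Subtype.val this
    rw [← this]
    rfl
  · intro h
    refine ⟨x.2, fun hxm => h ?_⟩
    have hEy : E y = x := Subtype.ext hxm.symm
    rw [← hEy]
    simp
end

section
/- Let G be a finite bipartite graph such that for every k ≤ Δ(G), every k-subset of a part of G has a common neighbour. Then G is C-HH: every homomorphism from a finite connected induced subgraph of G into G extends to an endomorphism of G. -/
open SimpleGraph

private lemma bool1 : ∀ (a b x : Bool), a ≠ x → b ≠ x → a = b := by decide

private lemma bool2 : ∀ (a x y : Bool), xor a x = xor a y → x = y := by decide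

private lemma bool3 : ∀ (p q x : Bool), q ≠ p → xor p (!x) = xor q x := by decide

private lemma bool4 : ∀ (a b : Bool), a ≠ b → a = !b := by decide

private lemma bool5 : ∀ (p q x y : Bool), p ≠ q → x ≠ y → xor p x = xor q y := by decide

-- closure under adjacency implies closure under reachability
lemma aux_closed {α : Type*} (G : SimpleGraph α) (B : Finset α)
    (h : ∀ u ∈ B, ∀ v, G.Adj u v → v ∈ B) :
    ∀ {u v : α}, G.Reachable u v → u ∈ B → v ∈ B := by
  intro u v hr hu
  obtain ⟨p⟩ := hr
  induction p with
  | nil => exact hu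
  | cons hadj p ih => exact ih (h _ hu _ hadj)

lemma aux_main {α : Type*} [Fintype α] [DecidableEq α] (G : SimpleGraph α)
    [DecidableRel G.Adj]
    (c : α → Bool) (hc : ∀ {u v}, G.Adj u v → c u ≠ c v) (d : ℕ)
    (hdub : ∀ v, (G.neighborSet v).ncard ≤ d)
    (hcn : ∀ (b : Bool) (S : Finset α), S.Nonempty → (∀ x ∈ S, c x = b) →
      S.card ≤ d → ∃ w, ∀ x ∈ S, G.Adj w x) :
    ∀ (n : ℕ) (B : Finset α) (f : α → α), Bᶜ.card = n →
      (∀ u ∈ B, ∀ v ∈ B, G.Adj u v → G.Adj (f u) (f v)) →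
      (∀ u ∈ B, ∀ v ∈ B, G.Reachable u v →
        xor (c u) (c (f u)) = xor (c v) (c (f v))) →
      ∃ g : α → α, (∀ u v, G.Adj u v → G.Adj (g u) (g v)) ∧ ∀ x ∈ B, g x = f x := by
  intro n
  induction n with
  | zero =>
    intro B f hB h1 h2
    have hBu : B = Finset.univ := by
      have h0 : Bᶜ = ∅ := Finset.card_eq_zero.mp hB
      have h1 := compl_compl B
      rw [h0] at h1
      simpa using h1.symm
    subst hBu
    exact ⟨f, fun u v h => h1 u (Finset.mem_univ u) v (Finset.mem_univ v) h,
      fun x _ => rfl⟩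
  | succ n ih =>
    intro B f hB h1 h2
    have hne : Bᶜ.Nonempty := by
      rw [← Finset.card_pos, hB]; omega
    by_cases hbd : ∃ v ∉ B, ∃ u ∈ B, G.Adj u v
    · obtain ⟨v, hv, u₀, hu₀, hadj₀⟩ := hbd
      let S : Finset α := (G.neighborFinset v ∩ B).image f
      have hu₀S : f u₀ ∈ S := by
        apply Finset.mem_image_of_mem
        simp [hadj₀.symm, hu₀]
      have hmono : ∀ x ∈ S, c x = c (f u₀) := by
        intro x hx
        obtain ⟨u, hu, rfl⟩ := Finset.mem_image.mp hx
        rw [Finset.mem_inter, mem_neighborFinset] at hu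
        obtain ⟨hvu, huB⟩ := hu
        have hr : G.Reachable u u₀ :=
          (hvu.symm.reachable).trans hadj₀.symm.reachable
        have hcu : c u = c u₀ := bool1 _ _ _ (hc hvu.symm) (hc hadj₀)
        have heq := h2 u huB u₀ hu₀ hr
        rw [hcu] at heq
        exact bool2 _ _ _ heq
      have hcard : S.card ≤ d := by
        have h3 : (G.neighborFinset v).card ≤ d := by
          have := hdub v
          rwa [Set.ncard_eq_toFinset_card', ← neighborFinset_def] at this
        calc S.card ≤ (G.neighborFinset v ∩ B).card := Finset.card_image_le
          _ ≤ (G.neighborFinset v).card := Finset.card_le_card Finset.inter_subset_left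
          _ ≤ d := h3
      obtain ⟨w, hw⟩ := hcn (c (f u₀)) S ⟨f u₀, hu₀S⟩ hmono hcard
      have hwS : ∀ u ∈ B, G.Adj u v → G.Adj w (f u) := by
        intro u hu huv
        exact hw _ (Finset.mem_image_of_mem f (by simp [huv.symm, hu]))
      have hcw : c w = !(c (f u₀)) := bool4 _ _ (hc (hw _ hu₀S))
      have hcard' : (insert v B)ᶜ.card = n := by
        rw [Finset.card_compl, Finset.card_insert_of_notMem hv]
        rw [Finset.card_compl] at hB
        omega
      let f' : α → α := Function.update f v w
      have hf'B : ∀ x ∈ B, f' x = f x := by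
        intro x hx
        exact Function.update_of_ne (fun h => hv (by rw [← h]; exact hx)) _ _
      have hf'v : f' v = w := Function.update_self _ _ _
      have hshift : xor (c v) (c (f' v)) = xor (c u₀) (c (f u₀)) := by
        rw [hf'v, hcw]
        exact bool3 _ _ _ (hc hadj₀)
      have H1 : ∀ x ∈ insert v B, ∀ y ∈ insert v B, G.Adj x y → G.Adj (f' x) (f' y) := by
        intro x hx y hy hxy
        rcases Finset.mem_insert.mp hx with hxv | hxB
        case' inl => subst hxv
        · rcases Finset.mem_insert.mp hy with hyv | hyB
          case' inl => subst hyv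
          · exact absurd hxy (G.irrefl)
          · rw [hf'v, hf'B y hyB]
            exact hwS y hyB hxy.symm
        · rcases Finset.mem_insert.mp hy with hyv | hyB
          case' inl => subst hyv
          · rw [hf'v, hf'B x hxB]
            exact (hwS x hxB hxy).symm
          · rw [hf'B x hxB, hf'B y hyB]
            exact h1 x hxB y hyB hxy
      have H2 : ∀ x ∈ insert v B, ∀ y ∈ insert v B, G.Reachable x y →
          xor (c x) (c (f' x)) = xor (c y) (c (f' y)) := by
        intro x hx y hy hr
        rcases Finset.mem_insert.mp hx with hxv | hxB
        case' inl => subst hxv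
        · rcases Finset.mem_insert.mp hy with hyv | hyB
          case' inl => subst hyv
          · rfl
          · rw [hf'B y hyB, hshift]
            exact h2 u₀ hu₀ y hyB (hadj₀.reachable.trans hr)
        · rcases Finset.mem_insert.mp hy with hyv | hyB
          case' inl => subst hyv
          · rw [hf'B x hxB, hshift]
            exact (h2 u₀ hu₀ x hxB (hadj₀.reachable.trans hr.symm)).symm
          · rw [hf'B x hxB, hf'B y hyB]
            exact h2 x hxB y hyB hr
      obtain ⟨g, hg1, hg2⟩ := ih (insert v B) f' hcard' H1 H2
      exact ⟨g, hg1, fun x hx => (hg2 x (Finset.mem_insert_of_mem hx)).trans (hf'B x hx)⟩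
    · push_neg at hbd
      have hclosed : ∀ u ∈ B, ∀ x, G.Adj u x → x ∈ B := by
        intro u hu x hux
        by_contra hx
        exact hbd x hx u hu hux
      obtain ⟨v, hv⟩ := hne
      rw [Finset.mem_compl] at hv
      have hcard' : (insert v B)ᶜ.card = n := by
        rw [Finset.card_compl, Finset.card_insert_of_notMem hv]
        rw [Finset.card_compl] at hB
        omega
      let f' : α → α := Function.update f v v
      have hf'B : ∀ x ∈ B, f' x = f x := by
        intro x hx
        exact Function.update_of_ne (fun h => hv (by rw [← h]; exact hx)) _ _
      have H1 : ∀ x ∈ insert v B, ∀ y ∈ insert v B, G.Adj x y → G.Adj (f' x) (f' y) := by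
        intro x hx y hy hxy
        rcases Finset.mem_insert.mp hx with hxv | hxB
        case' inl => subst hxv
        · rcases Finset.mem_insert.mp hy with hyv | hyB
          case' inl => subst hyv
          · exact absurd hxy (G.irrefl)
          · exact absurd (hclosed y hyB x hxy.symm) hv
        · rcases Finset.mem_insert.mp hy with hyv | hyB
          case' inl => subst hyv
          · exact absurd (hclosed x hxB y hxy) hv
          · rw [hf'B x hxB, hf'B y hyB]
            exact h1 x hxB y hyB hxy
      have H2 : ∀ x ∈ insert v B, ∀ y ∈ insert v B, G.Reachable x y →
          xor (c x) (c (f' x)) = xor (c y) (c (f' y)) := by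
        intro x hx y hy hr
        rcases Finset.mem_insert.mp hx with hxv | hxB
        case' inl => subst hxv
        · rcases Finset.mem_insert.mp hy with hyv | hyB
          case' inl => subst hyv
          · rfl
          · exact absurd (aux_closed G B hclosed hr.symm hyB) hv
        · rcases Finset.mem_insert.mp hy with hyv | hyB
          case' inl => subst hyv
          · exact absurd (aux_closed G B hclosed hr hxB) hv
          · rw [hf'B x hxB, hf'B y hyB]
            exact h2 x hxB y hyB hr
      obtain ⟨g, hg1, hg2⟩ := ih (insert v B) f' hcard' H1 H2
      exact ⟨g, hg1, fun x hx => (hg2 x (Finset.mem_insert_of_mem hx)).trans (hf'B x hx)⟩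

/-- Let `G` be a finite bipartite graph (with proper 2-coloring `c`) with
maximum degree `d` such that every nonempty subset of a part of size at most
`d` has a common neighbour.  Then `G` is C-HH. -/
theorem bipartite_commonNeighbours_isCHH {α : Type*} [Fintype α]
    (G : SimpleGraph α)
    (c : α → Bool) (hc : ∀ {u v}, G.Adj u v → c u ≠ c v)
    (d : ℕ)
    (hdub : ∀ v, (G.neighborSet v).ncard ≤ d)
    (hdmax : ∃ v, (G.neighborSet v).ncard = d)
    (hcn : ∀ (b : Bool) (S : Finset α), S.Nonempty → (∀ x ∈ S, c x = b) →
      S.card ≤ d → ∃ w, ∀ x ∈ S, G.Adj w x) :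
    IsCHH G := by
  classical
  intro A hA hconn φ
  set f₀ : α → α := fun x => if h : x ∈ A then φ ⟨x, h⟩ else x with hf₀
  have hf₀A : ∀ (x : α) (h : x ∈ A), f₀ x = φ ⟨x, h⟩ := by
    intro x h; simp [hf₀, h]
  set B : Finset α := hA.toFinset with hBdef
  have hmemB : ∀ x, x ∈ B ↔ x ∈ A := fun x => Set.Finite.mem_toFinset hA
  -- shift constant on A
  have hshiftA : ∀ a b : ↥A, xor (c a.1) (c (φ a)) = xor (c b.1) (c (φ b)) := by
    intro a b
    obtain ⟨p⟩ := hconn a b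
    induction p with
    | nil => rfl
    | cons hadj p ih =>
      refine Eq.trans ?_ ih
      have h1 : G.Adj _ _ := hadj
      have h2 : G.Adj (φ _) (φ _) := φ.map_adj hadj
      exact bool5 _ _ _ _ (hc h1) (hc h2)
  have H1 : ∀ u ∈ B, ∀ v ∈ B, G.Adj u v → G.Adj (f₀ u) (f₀ v) := by
    intro u hu v hv huv
    rw [hmemB] at hu hv
    rw [hf₀A u hu, hf₀A v hv]
    exact φ.map_adj huv
  have H2 : ∀ u ∈ B, ∀ v ∈ B, G.Reachable u v →
      xor (c u) (c (f₀ u)) = xor (c v) (c (f₀ v)) := by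
    intro u hu v hv _
    rw [hmemB] at hu hv
    rw [hf₀A u hu, hf₀A v hv]
    exact hshiftA ⟨u, hu⟩ ⟨v, hv⟩
  obtain ⟨g, hg1, hg2⟩ := aux_main G c hc d hdub hcn Bᶜ.card B f₀ rfl H1 H2
  refine ⟨⟨g, fun h => hg1 _ _ h⟩, fun a => ?_⟩
  have := hg2 a.1 ((hmemB a.1).mpr a.2)
  simpa [hf₀A a.1 a.2] using this
end

section
/- Let G be a connected finite C-HH graph such that the neighbourhood of every vertex is an independent set. Then G is bipartite (contains no odd cycles). -/
namespace SimpleGraph.Walk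

variable {V : Type*} {G : SimpleGraph V} {u v : V}

theorem exists_walk_getVert_getVert (p : G.Walk u v) {i j : ℕ} (hij : i ≤ j)
    (hj : j ≤ p.length) : ∃ q : G.Walk (p.getVert i) (p.getVert j), q.length = j - i :=
  ⟨((p.drop i).take (j - i)).copy rfl (by rw [drop_getVert, Nat.add_sub_cancel' hij]),
    by simp only [length_copy, take_length, drop_length, inf_eq_left]; omega⟩

@[simp]
theorem length_induce {s : Set V} (p : G.Walk u v) (hp : ∀ x ∈ p.support, x ∈ s) :
    (p.induce s hp).length = p.length := by
  induction p with
  | nil => rfl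
  | cons _ _ ih => simp [ih]

theorem nonempty_coloring_induce_support (p : G.Walk u v)
    (h : ∀ w (c : G.Walk w w), c.length ≤ p.length + 1 → Even c.length) :
    Nonempty ((G.induce {x | x ∈ p.support}).Coloring Bool) := by
  choose idx hidx hle using fun x : {x | x ∈ p.support} => mem_support_iff_exists_getVert.mp x.2
  have parity_ne : ∀ x y, G.Adj x.1 y.1 → idx x ≤ idx y → ¬(Even (idx x) ↔ Even (idx y)) := by
    intro x y hxy hidx_le
    obtain ⟨q, hq⟩ := p.exists_walk_getVert_getVert hidx_le (hle y)
    have hclosed := h _ (q.concat (by rw [hidx, hidx]; exact hxy.symm))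
      (by rw [length_concat, hq]; have := hle y; omega)
    rwa [length_concat, hq, Nat.even_add_one, Nat.even_sub hidx_le, iff_comm] at hclosed
  refine ⟨Coloring.mk (fun x => decide (Even (idx x))) fun {x y} hxy => ?_⟩
  simp only [ne_eq, decide_eq_decide]
  rcases le_total (idx x) (idx y) with hxy_le | hyx_le
  · exact parity_ne x y hxy hxy_le
  · exact fun hiff => parity_ne y x hxy.symm hyx_le hiff.symm

theorem exists_odd_walk_between_neighbours_of_odd_loop (w : G.Walk u u) (hw : Odd w.length) :
    ∃ (x y v : V) (P : G.Walk x y), G.Adj v x ∧ G.Adj v y ∧ Odd P.length ∧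
      ∀ z (c : G.Walk z z), c.length ≤ P.length + 1 → Even c.length := by
  classical
  have hex : ∃ n, ∃ u, ∃ w : G.Walk u u, Odd w.length ∧ w.length = n := ⟨_, u, w, hw, rfl⟩
  obtain ⟨v, w, hodd, hlen⟩ := Nat.find_spec hex
  have hshorter : ∀ z (c : G.Walk z z), c.length < w.length → Even c.length := fun z c hc =>
    Nat.not_odd_iff_even.mp fun h => Nat.find_min hex (hlen ▸ hc) ⟨z, c, h, rfl⟩
  cases w with
  | nil => simp at hodd
  | cons hvx q =>
    have hq : ¬q.Nil := fun hnil => G.loopless.irrefl v (hnil.eq ▸ hvx)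
    have hqlen := q.length_dropLast_add_one hq
    refine ⟨_, _, v, q.dropLast, hvx, (q.adj_penultimate hq).symm, ?_, fun z c hc => ?_⟩
    · rw [length_cons, ← hqlen] at hodd
      simpa [Nat.odd_add_one, Nat.not_even_iff_odd] using hodd
    · exact hshorter z c (by rw [length_cons]; omega)

end SimpleGraph.Walk

theorem IsCHH.false_of_odd_walk {α : Type*} {G : SimpleGraph α} (hG : IsCHH G)
    (hind : ∀ v x y : α, G.Adj v x → G.Adj v y → ¬ G.Adj x y)
    {v x y : α} (P : G.Walk x y) (hP : Odd P.length)
    (hc : Nonempty ((G.induce {z | z ∈ P.support}).Coloring Bool))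
    (hx : G.Adj v x) (hy : G.Adj v y) : False := by
  obtain ⟨c⟩ := hc
  set A : Set α := {z | z ∈ P.support}
  let x' : A := ⟨x, P.start_mem_support⟩
  let y' : A := ⟨y, P.end_mem_support⟩
  have hcxy : c y' ≠ c x' := by
    have : ¬c x' ↔ c y' := (c.odd_length_iff_not_congr (P.induce A fun _ h => h)).mp (by simpa)
    grind
  let φ : G.induce A →g G :=
    ⟨fun z => if c z = c x' then x else v, fun {z z'} hzz' => by
      have hne := c.valid hzz'
      split_ifs with h₁ h₂ h₂
      · exact absurd (h₁.trans h₂.symm) hne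
      · exact hx.symm
      · exact hx
      · exact (hne ((Bool.eq_not_of_ne h₁).trans (Bool.eq_not_of_ne h₂).symm)).elim⟩
  obtain ⟨ψ, hψ⟩ := hG A P.support.finite_toSet P.connected_induce_support φ
  have hψx : ψ x = x := by simpa [φ] using hψ x'
  have hψy : ψ y = v := by simpa [φ, hcxy] using hψ y'
  exact hind (ψ v) x v (by simpa [hψx] using ψ.map_adj hx) (by simpa [hψy] using ψ.map_adj hy)
    hx.symm

theorem cHH_independent_neighbourhoods_bipartite_general {α : Type*}
    (G : SimpleGraph α) (hG : IsCHH G)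
    (hind : ∀ v x y : α, G.Adj v x → G.Adj v y → ¬ G.Adj x y) :
    ∀ {v : α} (p : G.Walk v v), p.IsCycle → Even p.length := by
  intro v p _
  by_contra hodd
  obtain ⟨x, y, u, P, hux, huy, hP, hshort⟩ :=
    p.exists_odd_walk_between_neighbours_of_odd_loop (Nat.not_even_iff_odd.mp hodd)
  exact hG.false_of_odd_walk hind P hP (P.nonempty_coloring_induce_support hshort) hux huy

/-- A connected finite C-HH graph in which the neighbourhood of every vertex
is an independent set is bipartite: it contains no odd cycles. -/
theorem cHH_independent_neighbourhoods_bipartite {α : Type*} [Fintype α]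
    (G : SimpleGraph α) (hconn : G.Connected) (hG : IsCHH G)
    (hind : ∀ v x y : α, G.Adj v x → G.Adj v y → ¬ G.Adj x y) :
    ∀ {v : α} (p : G.Walk v v), p.IsCycle → Even p.length :=
  cHH_independent_neighbourhoods_bipartite_general G hG hind
end

section
/- Every finite PCM graph contains an induced subgraph isomorphic to 2·K₂ (two disjoint edges with no edges between them). -/
/-!
If `H` had no induced `2·K₂` between `Z` and `W`, any two vertices of `Z` would have comparable
neighbourhoods in `W`, so some `z₀ ∈ Z` would see every vertex of `W` that has a neighbour in `Z`.
By connectivity every vertex of `W` has such a neighbour, in particular the partner `m z₀` of `z₀`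
in the complement matching, which contradicts `z₀ ≁ m z₀`.
-/

lemma Finset.exists_forall_le_of_total {ι α : Type*} [LE α] [IsTrans α LE.le] (f : ι → α)
    (s : Finset ι) (hs : s.Nonempty) (htotal : ∀ i ∈ s, ∀ j ∈ s, f i ≤ f j ∨ f j ≤ f i) :
    ∃ i ∈ s, ∀ j ∈ s, f j ≤ f i := by
  obtain ⟨i, hi, hmax⟩ := s.exists_maximalFor f hs
  exact ⟨i, hi, fun j hj => (htotal i hi j hj).elim (hmax hj) id⟩

namespace SimpleGraph

variable {V : Type*} {G : SimpleGraph V}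

lemma exists_two_K2_of_incomparable_neighborSet_inter {W : Set V} {z₁ z₂ : V}
    (h₁₂ : ¬ G.neighborSet z₁ ∩ W ⊆ G.neighborSet z₂ ∩ W)
    (h₂₁ : ¬ G.neighborSet z₂ ∩ W ⊆ G.neighborSet z₁ ∩ W) :
    ∃ w' w'', w' ∈ W ∧ w'' ∈ W ∧ z₁ ≠ z₂ ∧ w' ≠ w'' ∧
      G.Adj z₁ w'' ∧ G.Adj z₂ w' ∧ ¬ G.Adj z₁ w' ∧ ¬ G.Adj z₂ w'' := by
  obtain ⟨w'', ⟨hz₁w'', hw''⟩, hz₂w''⟩ := Set.not_subset.mp h₁₂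
  obtain ⟨w', ⟨hz₂w', hw'⟩, hz₁w'⟩ := Set.not_subset.mp h₂₁
  refine ⟨w', w'', hw', hw'', ?_, ?_, hz₁w'', hz₂w', fun h => hz₁w' ⟨h, hw'⟩,
    fun h => hz₂w'' ⟨h, hw''⟩⟩
  · rintro rfl
    exact h₁₂ subset_rfl
  · rintro rfl
    exact hz₁w' ⟨hz₁w'', hw''⟩

lemma Preconnected.exists_adj_mem_of_bipartite {Z W : Set V} (hG : G.Preconnected)
    (hdisj : Disjoint Z W) (hacross : ∀ u v, G.Adj u v → (u ∈ Z ∧ v ∈ W) ∨ (u ∈ W ∧ v ∈ Z))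
    (hZ : Z.Nonempty) {w : V} (hw : w ∈ W) : ∃ z ∈ Z, G.Adj z w := by
  obtain ⟨z₀, hz₀⟩ := hZ
  have : Nontrivial V := nontrivial_of_ne z₀ w (hdisj.ne_of_mem hz₀ hw)
  obtain ⟨z, hwz⟩ := hG.exists_adj_of_nontrivial w
  rcases hacross w z hwz with ⟨hwZ, -⟩ | ⟨-, hz⟩
  · exact absurd hw (Set.disjoint_left.mp hdisj hwZ)
  · exact ⟨z, hz, hwz.symm⟩

end SimpleGraph

theorem pcm_contains_two_K2_general {α : Type*} (H : SimpleGraph α)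
    (Z W : Finset α) (hdisj : Disjoint Z W)
    (hacross : ∀ u v, H.Adj u v → (u ∈ Z ∧ v ∈ W) ∨ (u ∈ W ∧ v ∈ Z))
    (hconn : H.Connected) (hZ2 : 2 ≤ Z.card)
    (m : {z // z ∈ Z} → α) (hmW : ∀ z, m z ∈ W)
    (hmna : ∀ z : {z // z ∈ Z}, ¬ H.Adj z.1 (m z)) :
    ∃ z' z'' w' w'' : α, z' ∈ Z ∧ z'' ∈ Z ∧ w' ∈ W ∧ w'' ∈ W ∧
      z' ≠ z'' ∧ w' ≠ w'' ∧
      H.Adj z' w'' ∧ H.Adj z'' w' ∧ ¬ H.Adj z' w' ∧ ¬ H.Adj z'' w'' := by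
  by_contra hno2K2
  set N : α → Set α := fun z => H.neighborSet z ∩ W
  have htotal : ∀ z₁ ∈ Z, ∀ z₂ ∈ Z, N z₁ ≤ N z₂ ∨ N z₂ ≤ N z₁ := by
    intro z₁ hz₁ z₂ hz₂
    by_contra! hincomparable
    obtain ⟨w', w'', hw', hw'', hpattern⟩ :=
      SimpleGraph.exists_two_K2_of_incomparable_neighborSet_inter hincomparable.1 hincomparable.2
    exact hno2K2 ⟨z₁, z₂, w', w'', hz₁, hz₂, hw', hw'', hpattern⟩
  obtain ⟨z₀, hz₀, hmax⟩ := Z.exists_forall_le_of_total N (Finset.card_pos.mp (by omega)) htotal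
  obtain ⟨u, hu, huw⟩ := hconn.preconnected.exists_adj_mem_of_bipartite
    (Finset.disjoint_coe.mpr hdisj) hacross ⟨z₀, hz₀⟩ (hmW ⟨z₀, hz₀⟩)
  exact hmna ⟨z₀, hz₀⟩ (hmax u hu ⟨huw, hmW _⟩).1

/-- Every finite PCM graph contains an induced copy of `2·K₂`: a finite
connected bipartite graph `H` with parts `Z`, `W`, `2 ≤ |Z| ≤ |W|`, having a
perfect complement matching (an injection `m` of `Z` into `W` with `z ≁ m z`
for all `z ∈ Z`) contains vertices `z', z'' ∈ Z`, `w', w'' ∈ W` with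
`z' ~ w''`, `z'' ~ w'`, `z' ≁ w'`, `z'' ≁ w''`. -/
theorem pcm_contains_two_K2 {α : Type*} [Fintype α] (H : SimpleGraph α)
    (Z W : Finset α) (hdisj : Disjoint Z W) (hcover : ∀ v, v ∈ Z ∨ v ∈ W)
    (hacross : ∀ u v, H.Adj u v → (u ∈ Z ∧ v ∈ W) ∨ (u ∈ W ∧ v ∈ Z))
    (hconn : H.Connected) (hZ2 : 2 ≤ Z.card) (hZW : Z.card ≤ W.card)
    (m : {z // z ∈ Z} → α) (hmW : ∀ z, m z ∈ W)
    (hminj : Function.Injective m)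
    (hmna : ∀ z : {z // z ∈ Z}, ¬ H.Adj z.1 (m z)) :
    ∃ z' z'' w' w'' : α, z' ∈ Z ∧ z'' ∈ Z ∧ w' ∈ W ∧ w'' ∈ W ∧
      z' ≠ z'' ∧ w' ≠ w'' ∧
      H.Adj z' w'' ∧ H.Adj z'' w' ∧ ¬ H.Adj z' w' ∧ ¬ H.Adj z'' w'' :=
  pcm_contains_two_K2_general H Z W hdisj hacross hconn hZ2 m hmW hmna
end

section
/- Let G be a finite C-HH graph in which the neighbourhood of every vertex is a disjoint union of complete graphs each of size s ≥ 2 (in particular every edge lies in a triangle). Then every induced cycle of G is a triangle. -/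
private lemma nbr_trans {α : Type*} {G : SimpleGraph α} {m : ℕ} {v : α}
    (h : IsDisjUnionOfCompleteOfSize (G.induce (G.neighborSet v)) m)
    {a b c : α} (ha : G.Adj v a) (hb : G.Adj v b) (hc : G.Adj v c)
    (hab : G.Adj a b) (hbc : G.Adj b c) (hac : a ≠ c) : G.Adj a c := by
  have key := h.1 ⟨a, ha⟩ ⟨b, hb⟩ ⟨c, hc⟩ (by simpa using hab) (by simpa using hbc)
    (by simp [Subtype.ext_iff]; exact hac)
  simpa using key

private lemma edge_triangle {α : Type*} {G : SimpleGraph α} {m : ℕ} (hm : 2 ≤ m) {v a : α}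
    (h : IsDisjUnionOfCompleteOfSize (G.induce (G.neighborSet v)) m)
    (ha : G.Adj v a) : ∃ x, G.Adj v x ∧ G.Adj a x := by
  obtain ⟨htr, hcard⟩ := h
  have hcA : (insert (⟨a, ha⟩ : G.neighborSet v)
      {y | (G.induce (G.neighborSet v)).Adj ⟨a, ha⟩ y}).ncard = m := hcard _
  have hex : ∃ y ∈ (insert (⟨a, ha⟩ : G.neighborSet v)
      {y | (G.induce (G.neighborSet v)).Adj ⟨a, ha⟩ y}), y ≠ ⟨a, ha⟩ := by
    by_contra hcon
    push_neg at hcon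
    have hsub : (insert (⟨a, ha⟩ : G.neighborSet v)
        {y | (G.induce (G.neighborSet v)).Adj ⟨a, ha⟩ y}) ⊆ {⟨a, ha⟩} :=
      fun y hy => Set.mem_singleton_iff.2 (hcon y hy)
    have hle := Set.ncard_le_ncard hsub (Set.finite_singleton _)
    rw [hcA, Set.ncard_singleton] at hle
    omega
  obtain ⟨y, hyA, hyne⟩ := hex
  rcases Set.mem_insert_iff.1 hyA with h1 | h2
  · exact absurd h1 hyne
  · exact ⟨y.1, y.2, by simpa using h2⟩

/-- In a finite C-HH graph in which the neighbourhood of every vertex is a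
disjoint union of complete graphs each of size `s ≥ 2`, every induced cycle is
a triangle. -/
theorem cHH_clique_neighbourhoods_cycles_are_triangles {α : Type*} [Fintype α]
    (G : SimpleGraph α) (hG : IsCHH G) (s : ℕ) (hs : 2 ≤ s)
    (hnbr : ∀ v : α,
      IsDisjUnionOfCompleteOfSize (G.induce (G.neighborSet v)) s) :
    ∀ k, 4 ≤ k → ¬ HasInducedCycle G k := by
  intro k
  induction k using Nat.strong_induction_on with
  | _ k IH =>
  intro hk hcyc
  obtain ⟨f, hf⟩ := hcyc
  have hkpos : 0 < k := by omega
  have hsucc : ∀ i j : ℕ, i < k →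
      ((i + 1) % k = j ↔ (i + 1 = k ∧ j = 0) ∨ (i + 1 < k ∧ j = i + 1)) := by
    intro i j hi
    rcases Nat.lt_or_ge (i + 1) k with h | h
    · rw [Nat.mod_eq_of_lt h]; omega
    · have hik : i + 1 = k := by omega
      rw [hik, Nat.mod_self]; omega
  obtain ⟨F, hadj', hinj⟩ : ∃ F : ℕ → α,
      (∀ i j : ℕ, i < k → j < k → (G.Adj (F i) (F j) ↔
        (j = i + 1 ∨ i = j + 1 ∨ (i = 0 ∧ j = k - 1) ∨ (j = 0 ∧ i = k - 1)))) ∧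
      (∀ i j : ℕ, i < k → j < k → F i = F j → i = j) := by
    refine ⟨fun i => f ⟨i % k, Nat.mod_lt _ hkpos⟩, ?_, ?_⟩
    · intro i j hi hj
      have e := hf ⟨i % k, Nat.mod_lt _ hkpos⟩ ⟨j % k, Nat.mod_lt _ hkpos⟩
      beta_reduce
      rw [e]
      simp only [Nat.mod_eq_of_lt hi, Nat.mod_eq_of_lt hj]
      rw [hsucc i j hi, hsucc j i hj]
      omega
    · intro i j hi hj hfe
      have h2 := congrArg Fin.val (f.injective hfe)
      simpa [Nat.mod_eq_of_lt hi, Nat.mod_eq_of_lt hj] using h2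
  have hne : ∀ i j : ℕ, i < k → j < k → i ≠ j → F i ≠ F j :=
    fun i j hi hj hij hfe => hij (hinj i j hi hj hfe)
  have h01 : G.Adj (F 0) (F 1) := (hadj' 0 1 (by omega) (by omega)).2 (by omega)
  obtain ⟨x, hx0, hx1⟩ := edge_triangle hs (hnbr (F 0)) h01
  have hxF : ∀ m : ℕ, m < k → x ≠ F m := by
    intro m hm hxm
    have ha := (hadj' 0 m (by omega) hm).1 (hxm ▸ hx0)
    have hb := (hadj' 1 m (by omega) hm).1 (hxm ▸ hx1)
    omega
  -- x is not adjacent to any F j for 2 ≤ j < k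
  have hxm : ∀ j : ℕ, 2 ≤ j → j < k → ¬ G.Adj x (F j) := by
    by_contra hcon
    push_neg at hcon
    obtain ⟨t0, ht02, ht0k, ht0adj⟩ := hcon
    have hex : ∃ t, 2 ≤ t ∧ t < k ∧ G.Adj x (F t) := ⟨t0, ht02, ht0k, ht0adj⟩
    classical
    obtain ⟨ht2, htk, htadj⟩ := Nat.find_spec hex
    set t := Nat.find hex with htdef
    have hmin : ∀ m, m < t → ¬(2 ≤ m ∧ m < k ∧ G.Adj x (F m)) := fun m hm => Nat.find_min hex hm
    by_cases ht2' : t = 2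
    · have h12 : G.Adj (F 1) (F 2) := (hadj' 1 2 (by omega) (by omega)).2 (by omega)
      have h02 : G.Adj (F 0) (F 2) :=
        nbr_trans (hnbr (F 1)) h01.symm hx1 h12 hx0 (ht2' ▸ htadj)
          (hne 0 2 (by omega) (by omega) (by omega))
      have := (hadj' 0 2 (by omega) (by omega)).1 h02
      omega
    by_cases htk' : t = k - 1
    · have h0k : G.Adj (F 0) (F (k - 1)) := (hadj' 0 (k - 1) (by omega) (by omega)).2 (by omega)
      have h1k : G.Adj (F 1) (F (k - 1)) :=
        nbr_trans (hnbr (F 0)) h01 hx0 h0k hx1 (htk' ▸ htadj)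
          (hne 1 (k - 1) (by omega) (by omega) (by omega))
      have := (hadj' 1 (k - 1) (by omega) (by omega)).1 h1k
      omega
    · -- 3 ≤ t ≤ k - 2 : build a shorter induced cycle x, F 1, ..., F t
      have ht3 : 3 ≤ t := by omega
      have htk2 : t ≤ k - 2 := by omega
      set g : Fin (t + 1) → α := fun i => if i.val = 0 then x else F i.val with hg
      have hginj : Function.Injective g := by
        intro a b hab
        simp only [hg] at hab
        by_cases ha0 : a.val = 0 <;> by_cases hb0 : b.val = 0
        · exact Fin.ext (by omega)
        · rw [if_pos ha0, if_neg hb0] at hab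
          exact absurd hab (hxF b.val (by omega))
        · rw [if_neg ha0, if_pos hb0] at hab
          exact absurd hab.symm (hxF a.val (by omega))
        · rw [if_neg ha0, if_neg hb0] at hab
          exact Fin.ext (hinj a.val b.val (by omega) (by omega) hab)
      refine IH (t + 1) (by omega) (by omega) ⟨⟨g, hginj⟩, ?_⟩
      intro a b
      have haj : a.val < t + 1 := a.isLt
      have hbj : b.val < t + 1 := b.isLt
      have hs1 : (a.val + 1) % (t + 1) = b.val ↔
          (a.val = t ∧ b.val = 0) ∨ (a.val < t ∧ b.val = a.val + 1) := by
        rcases Nat.lt_or_ge (a.val + 1) (t + 1) with h | h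
        · rw [Nat.mod_eq_of_lt h]; omega
        · have e : a.val + 1 = t + 1 := by omega
          rw [e, Nat.mod_self]; omega
      have hs2 : (b.val + 1) % (t + 1) = a.val ↔
          (b.val = t ∧ a.val = 0) ∨ (b.val < t ∧ a.val = b.val + 1) := by
        rcases Nat.lt_or_ge (b.val + 1) (t + 1) with h | h
        · rw [Nat.mod_eq_of_lt h]; omega
        · have e : b.val + 1 = t + 1 := by omega
          rw [e, Nat.mod_self]; omega
      simp only [Function.Embedding.coeFn_mk, hg]
      rw [hs1, hs2]
      by_cases ha0 : a.val = 0 <;> by_cases hb0 : b.val = 0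
      · rw [if_pos ha0, if_pos hb0]
        constructor
        · intro h; exact absurd h (G.irrefl)
        · intro h; omega
      · rw [if_pos ha0, if_neg hb0]
        constructor
        · intro hadjxb
          rcases Nat.lt_or_ge b.val 2 with hb1 | hb2
          · have : b.val = 1 := by omega
            omega
          · have hbt : ¬ b.val < t := fun h => hmin b.val h ⟨hb2, by omega, hadjxb⟩
            have : b.val = t := by omega
            omega
        · intro h
          have hb1t : b.val = 1 ∨ b.val = t := by omega
          rcases hb1t with hb | hb
          · rw [hb]; exact hx1.symm
          · rw [hb]; exact htadj
      · rw [if_neg ha0, if_pos hb0]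
        constructor
        · intro hadjax
          have hadjxa : G.Adj x (F a.val) := hadjax.symm
          rcases Nat.lt_or_ge a.val 2 with ha1 | ha2
          · have : a.val = 1 := by omega
            omega
          · have hat : ¬ a.val < t := fun h => hmin a.val h ⟨ha2, by omega, hadjxa⟩
            have : a.val = t := by omega
            omega
        · intro h
          have ha1t : a.val = 1 ∨ a.val = t := by omega
          rcases ha1t with ha | ha
          · rw [ha]; exact hx1
          · rw [ha]; exact htadj.symm
      · rw [if_neg ha0, if_neg hb0]
        rw [hadj' a.val b.val (by omega) (by omega)]
        omega
  -- the path A = {x, F 1, ..., F (k-1)} and the folding homomorphism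
  classical
  set A : Set α := insert x {a | ∃ i : ℕ, 0 < i ∧ i < k ∧ a = F i} with hA
  have hxA : x ∈ A := Set.mem_insert _ _
  have hFA : ∀ i : ℕ, 0 < i → i < k → F i ∈ A :=
    fun i h1 h2 => Set.mem_insert_iff.2 (Or.inr ⟨i, h1, h2, rfl⟩)
  have hAfin : A.Finite := Set.toFinite A
  have hmem : ∀ a ∈ A, a = x ∨ ∃ i : ℕ, 0 < i ∧ i < k ∧ a = F i :=
    fun a ha => Set.mem_insert_iff.1 ha
  have hreach : ∀ i : ℕ, ∀ (h1 : 0 < i) (h2 : i < k),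
      (G.induce A).Reachable ⟨x, hxA⟩ ⟨F i, hFA i h1 h2⟩ := by
    intro i
    induction i with
    | zero => intro h1; omega
    | succ n ihn =>
      intro h1 h2
      rcases Nat.eq_zero_or_pos n with hn | hn
      · subst hn
        have hadj1 : (G.induce A).Adj ⟨x, hxA⟩ ⟨F 1, hFA 1 (by omega) (by omega)⟩ := by
          simpa using hx1.symm
        exact hadj1.reachable
      · have hstep : (G.induce A).Adj ⟨F n, hFA n hn (by omega)⟩ ⟨F (n + 1), hFA _ h1 h2⟩ := by
          simpa using (hadj' n (n + 1) (by omega) h2).2 (by omega)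
        exact (ihn hn (by omega)).trans hstep.reachable
  have hconn : (G.induce A).Connected := by
    rw [SimpleGraph.connected_iff]
    refine ⟨?_, ⟨⟨x, hxA⟩⟩⟩
    intro u v
    have key : ∀ w : A, (G.induce A).Reachable ⟨x, hxA⟩ w := by
      rintro ⟨w, hw⟩
      rcases hmem w hw with rfl | ⟨i, h1, h2, rfl⟩
      · exact SimpleGraph.Reachable.refl _
      · exact hreach i h1 h2
    exact (key u).symm.trans (key v)
  have hxadj_only : ∀ i : ℕ, 0 < i → i < k → G.Adj x (F i) → i = 1 := by
    intro i h1 h2 hadjxi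
    by_contra hne1
    exact hxm i (by omega) h2 hadjxi
  have hmap : ∀ {u v : A}, (G.induce A).Adj u v →
      G.Adj (if u.1 = x then F 0 else u.1) (if v.1 = x then F 0 else v.1) := by
    rintro ⟨a, haA⟩ ⟨b, hbA⟩ hab
    have hab' : G.Adj a b := hab
    by_cases ha : a = x <;> by_cases hb : b = x
    · rw [ha, hb] at hab'
      exact absurd hab' (G.irrefl)
    · simp only [if_pos ha, if_neg hb]
      rcases hmem b hbA with hbx | ⟨i, h1, h2, rfl⟩
      · exact absurd hbx hb
      · rw [ha] at hab'
        have : i = 1 := hxadj_only i h1 h2 hab'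
        rw [this]; exact h01
    · simp only [if_neg ha, if_pos hb]
      rcases hmem a haA with hax | ⟨i, h1, h2, rfl⟩
      · exact absurd hax ha
      · rw [hb] at hab'
        have : i = 1 := hxadj_only i h1 h2 hab'.symm
        rw [this]; exact h01.symm
    · simp only [if_neg ha, if_neg hb]
      exact hab'
  obtain ⟨ψ, hψ⟩ := hG A hAfin hconn ⟨fun v => if v.1 = x then F 0 else v.1, hmap⟩
  have hψx : ψ x = F 0 := by
    have h : ψ x = if x = x then F 0 else x := hψ ⟨x, hxA⟩
    simpa using h
  have hψF : ∀ i : ℕ, 0 < i → i < k → ψ (F i) = F i := by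
    intro i h1 h2
    have h : ψ (F i) = if F i = x then F 0 else F i := hψ ⟨F i, hFA i h1 h2⟩
    rwa [if_neg (Ne.symm (hxF i h2))] at h
  have h0k : G.Adj (F 0) (F (k - 1)) := (hadj' 0 (k - 1) (by omega) (by omega)).2 (by omega)
  have hw0 : G.Adj (ψ (F 0)) (F 0) := by
    have := ψ.map_adj hx0
    rwa [hψx] at this
  have hw1 : G.Adj (ψ (F 0)) (F 1) := by
    have := ψ.map_adj h01
    rwa [hψF 1 (by omega) (by omega)] at this
  have hwk : G.Adj (ψ (F 0)) (F (k - 1)) := by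
    have := ψ.map_adj h0k
    rwa [hψF (k - 1) (by omega) (by omega)] at this
  have hfinal := nbr_trans (hnbr (F 0)) h01 hw0.symm h0k hw1.symm hwk
    (hne 1 (k - 1) (by omega) (by omega) (by omega))
  have := (hadj' 1 (k - 1) (by omega) (by omega)).1 hfinal
  omega
end
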